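/- arXiv:math/0209262 — 6 statements merged into one kernel-verified Lean document; each statement's English description precedes it below -/
import Mathlib

section
/- Let f^{ij}_k (1 ≤ i,j,k ≤ N) be real constants and consider the N-dimensional real algebra F with basis e^1,…,e^N and bilinear multiplication e^i · e^j = Σ_k f^{ij}_k e^k. Assume F satisfies the identity (a·b)·c = (a·c)·b for all a,b,c ∈ F. Then the left-symmetry identity a·(b·c) − (a·b)·c = b·(a·c) − (b·a)·c holds for all a,b,c ∈ F if and only if for every u = (u^1,…,u^N) ∈ ℝ^N the symmetric bilinear form B_u defined on basis elements by B_u(e^i, e^j) = Σ_k (f^{ij}_k + f^{ji}_k) u^k is invariant, i.e. B_u(a·b, c) = B_u(a, c·b) for all a,b,c ∈ F. -/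
/-- For an `N`-dimensional real algebra with structure constants `f` (so
`e^i · e^j = Σ_k f^{ij}_k e^k`) satisfying `(a·b)·c = (a·c)·b`, the left-symmetry
identity holds for all elements iff for every `u ∈ ℝ^N` the symmetric bilinear form
`B_u(e^i, e^j) = Σ_k (f^{ij}_k + f^{ji}_k) u^k` is invariant, i.e.
`B_u(a·b, c) = B_u(a, c·b)`. -/
theorem stmt_1 {N : ℕ} (f : Fin N → Fin N → Fin N → ℝ)
    (mul : (Fin N → ℝ) → (Fin N → ℝ) → (Fin N → ℝ))
    (hmul : ∀ x y : Fin N → ℝ, ∀ k, mul x y k = ∑ i, ∑ j, x i * y j * f i j k)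
    (B : (Fin N → ℝ) → (Fin N → ℝ) → (Fin N → ℝ) → ℝ)
    (hB : ∀ u x y, B u x y = ∑ i, ∑ j, x i * y j * (∑ k, (f i j k + f j i k) * u k))
    (hq : ∀ a b c, mul (mul a b) c = mul (mul a c) b) :
    (∀ a b c, mul a (mul b c) - mul (mul a b) c
        = mul b (mul a c) - mul (mul b a) c) ↔
    (∀ u a b c, B u (mul a b) c = B u a (mul c b)) := by
  have swap3 : ∀ g : Fin N → Fin N → Fin N → ℝ,
      ∑ k, ∑ i, ∑ j, g i j k = ∑ i, ∑ j, ∑ k, g i j k := by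
    intro g
    rw [Finset.sum_comm]
    exact Finset.sum_congr rfl fun i _ => Finset.sum_comm
  have key : ∀ u x y, B u x y = ∑ k, (mul x y k + mul y x k) * u k := by
    intro u x y
    have L1 : B u x y
        = ∑ i, ∑ j, ∑ k, (x i * y j * f i j k * u k + y j * x i * f j i k * u k) := by
      rw [hB]
      apply Finset.sum_congr rfl; intro i _
      apply Finset.sum_congr rfl; intro j _
      rw [Finset.mul_sum]
      apply Finset.sum_congr rfl; intro k _
      ring
    have R1 : ∀ p q : Fin N → ℝ,
        ∑ k, mul p q k * u k = ∑ i, ∑ j, ∑ k, p i * q j * f i j k * u k := by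
      intro p q
      rw [← swap3]
      apply Finset.sum_congr rfl; intro k _
      rw [hmul, Finset.sum_mul]
      exact Finset.sum_congr rfl fun i _ => Finset.sum_mul ..
    rw [L1]
    simp only [Finset.sum_add_distrib, add_mul]
    rw [R1 x y, R1 y x]
    congr 1
    exact Finset.sum_comm
  constructor
  · intro hls u a b c
    rw [key, key]
    have V : mul (mul a b) c + mul c (mul a b) = mul a (mul c b) + mul (mul c b) a := by
      linear_combination hls c a b + hq a b c + hq c a b
    apply Finset.sum_congr rfl
    intro k _
    have hV := congrFun V k
    simp only [Pi.add_apply] at hV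
    rw [hV]
  · intro hinv a b c
    have V : ∀ a b c : Fin N → ℝ,
        mul (mul a b) c + mul c (mul a b) = mul a (mul c b) + mul (mul c b) a := by
      intro a b c
      funext k
      have h := hinv (Pi.single k 1) a b c
      rw [key, key] at h
      have hs : ∀ g : Fin N → ℝ,
          ∑ k', g k' * (Pi.single k 1 : Fin N → ℝ) k' = g k := by
        intro g
        simp [Pi.single_apply, mul_ite, Finset.sum_ite_eq]
      rw [hs, hs] at h
      simpa [Pi.add_apply] using h
    linear_combination V b c a + hq a c b - hq b c a
end

section
/- Let U ⊆ ℝ^N be open, let η^{ij} be a constant symmetric invertible real N×N matrix, let K₁ ∈ ℝ, and let H^1,…,H^N : U → ℝ be smooth. Define on U the coefficients g^{ij}(u) = Σ_s η^{is} ∂H^j/∂u^s + Σ_s η^{js} ∂H^i/∂u^s − K₁ u^i u^j and b^{ij}_k(u) = Σ_s η^{is} ∂²H^j/∂u^s∂u^k − K₁ δ^i_k u^j. Then the pair (g^{ij}, b^{ij}_k) satisfies relations (s1)–(s5) with constant K = K₁ at every point of U if and only if the functions H^i satisfy systems (ass1) and (ass2) at every point of U. -/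
/-- Partial derivative `∂f/∂u^s` of a function on `ℝ^N`. -/
noncomputable def pd {N : ℕ} (s : Fin N) (f : (Fin N → ℝ) → ℝ) (u : Fin N → ℝ) : ℝ :=
  fderiv ℝ f u (Pi.single s 1)

/-- Second partial derivative `∂²f/∂u^s∂u^k`. -/
noncomputable def pd2 {N : ℕ} (s k : Fin N) (f : (Fin N → ℝ) → ℝ) (u : Fin N → ℝ) : ℝ :=
  pd k (pd s f) u

/-- Kronecker delta. -/
def kd {N : ℕ} (i j : Fin N) : ℝ := if i = j then 1 else 0

/-- The bracketed expression in relation (s5), with free indices `i j r p k`. -/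
noncomputable def s5term {N : ℕ} (b : Fin N → Fin N → Fin N → (Fin N → ℝ) → ℝ)
    (K : ℝ) (u : Fin N → ℝ) (i j r p k : Fin N) : ℝ :=
  (∑ s, b s i p u * (pd s (b j r k) u - pd k (b j r s) u))
    + K * (b i j k u - b j i k u) * kd r p
    + (∑ s, b s i k u * (pd s (b j r p) u - pd p (b j r s) u))
    + K * (b i j p u - b j i p u) * kd r k

/-- Relations (s1)–(s5), at the point `u`, for coefficients `g^{ij}`, `b^{ij}_k`
and constant `K`, characterizing nonlocal (Mokhov–Ferapontov) Poisson brackets of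
hydrodynamic type. -/
noncomputable def RelS {N : ℕ} (g : Fin N → Fin N → (Fin N → ℝ) → ℝ)
    (b : Fin N → Fin N → Fin N → (Fin N → ℝ) → ℝ) (K : ℝ) (u : Fin N → ℝ) : Prop :=
  (∀ i j, g i j u = g j i u) ∧
  (∀ i j k, pd k (g i j) u = b i j k u + b j i k u) ∧
  (∀ i j r, ∑ s, g i s u * b j r s u = ∑ s, g j s u * b i r s u) ∧
  (∀ i j r k, (∑ s, g i s u * (pd k (b j r s) u - pd s (b j r k) u))
      + (∑ s, b i j s u * b s r k u) - (∑ s, b i r s u * b s j k u)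
      = K * (g i r u * kd j k - g i j u * kd r k)) ∧
  (∀ i j r p k, s5term b K u i j r p k + s5term b K u j r i p k
      + s5term b K u r i j p k = 0)

/-- System (ass1) at the point `u`. -/
noncomputable def Ass1 {N : ℕ} (η : Matrix (Fin N) (Fin N) ℝ)
    (H : Fin N → (Fin N → ℝ) → ℝ) (u : Fin N → ℝ) : Prop :=
  ∀ i j k l, ∑ s, ∑ p, pd2 k s (H i) u * η s p * pd2 p l (H j) u
    = ∑ s, ∑ p, pd2 k s (H j) u * η s p * pd2 p l (H i) u

/-- System (ass2) at the point `u`. -/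
noncomputable def Ass2 {N : ℕ} (η : Matrix (Fin N) (Fin N) ℝ) (K₁ : ℝ)
    (H : Fin N → (Fin N → ℝ) → ℝ) (u : Fin N → ℝ) : Prop :=
  ∀ i j k, ∑ s, ∑ p,
      ((∑ r, η i r * pd r (H s) u) + (∑ r, η s r * pd r (H i) u) - K₁ * u i * u s)
        * η j p * pd2 p s (H k) u
    = ∑ s, ∑ p,
      ((∑ r, η j r * pd r (H s) u) + (∑ r, η s r * pd r (H j) u) - K₁ * u j * u s)
        * η i p * pd2 p s (H k) u

section Aux

variable {N : ℕ} {f g : (Fin N → ℝ) → ℝ} {u : Fin N → ℝ}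

lemma sum_kd_left (j : Fin N) (f : Fin N → ℝ) : ∑ s, kd j s * f s = f j := by
  simp [kd, ite_mul]

lemma sum_kd_right (j : Fin N) (f : Fin N → ℝ) : ∑ s, kd s j * f s = f j := by
  simp [kd, ite_mul]

lemma sum_mul_kd_left (j : Fin N) (f : Fin N → ℝ) : ∑ s, f s * kd j s = f j := by
  simp [kd, mul_ite]

lemma sum_mul_kd_right (j : Fin N) (f : Fin N → ℝ) : ∑ s, f s * kd s j = f j := by
  simp [kd, mul_ite]

lemma contDiffAt_pd (hf : ContDiffAt ℝ (⊤ : ℕ∞) f u) (s : Fin N) :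
    ContDiffAt ℝ (⊤ : ℕ∞) (pd s f) u := by
  have h1 : ContDiffAt ℝ (⊤ : ℕ∞) (fderiv ℝ f) u := hf.fderiv_right (by simp)
  exact h1.clm_apply contDiffAt_const

lemma pd_pd (hf : ContDiffAt ℝ (⊤ : ℕ∞) f u) (s k : Fin N) :
    pd k (pd s f) u = fderiv ℝ (fderiv ℝ f) u (Pi.single k 1) (Pi.single s 1) := by
  have h1 : ContDiffAt ℝ (⊤ : ℕ∞) (fderiv ℝ f) u := hf.fderiv_right (by simp)
  have h2 : DifferentiableAt ℝ (fderiv ℝ f) u := h1.differentiableAt (by simp)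
  have h3 := fderiv_clm_apply (x := u) h2 (differentiableAt_const (Pi.single s (1:ℝ)))
  show fderiv ℝ (fun y => fderiv ℝ f y (Pi.single s 1)) u (Pi.single k 1) = _
  rw [h3]
  simp

lemma pd2_symm (hf : ContDiffAt ℝ (⊤ : ℕ∞) f u) (s k : Fin N) :
    pd2 s k f u = pd2 k s f u := by
  have h := hf.isSymmSndFDerivAt (le_trans (by rw [minSmoothness_of_isRCLikeNormedField]; norm_cast) (WithTop.coe_le_coe.mpr (le_top : (2:ℕ∞) ≤ ⊤)))
  unfold pd2
  rw [pd_pd hf, pd_pd hf, h]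

lemma pd_add (hf : DifferentiableAt ℝ f u) (hg : DifferentiableAt ℝ g u) (k : Fin N) :
    pd k (fun v => f v + g v) u = pd k f u + pd k g u := by
  unfold pd; rw [fderiv_fun_add hf hg]; rfl

lemma pd_sub (hf : DifferentiableAt ℝ f u) (hg : DifferentiableAt ℝ g u) (k : Fin N) :
    pd k (fun v => f v - g v) u = pd k f u - pd k g u := by
  unfold pd; rw [fderiv_fun_sub hf hg]; rfl

lemma pd_sum {ι : Type*} (t : Finset ι) {F : ι → (Fin N → ℝ) → ℝ}
    (h : ∀ i ∈ t, DifferentiableAt ℝ (F i) u) (k : Fin N) :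
    pd k (fun v => ∑ i ∈ t, F i v) u = ∑ i ∈ t, pd k (F i) u := by
  unfold pd; rw [fderiv_fun_sum h]; simp

lemma pd_const_mul (hf : DifferentiableAt ℝ f u) (c : ℝ) (k : Fin N) :
    pd k (fun v => c * f v) u = c * pd k f u := by
  unfold pd; rw [fderiv_const_mul hf]; simp

lemma pd_mul (hf : DifferentiableAt ℝ f u) (hg : DifferentiableAt ℝ g u) (k : Fin N) :
    pd k (fun v => f v * g v) u = pd k f u * g u + f u * pd k g u := by
  unfold pd; rw [fderiv_fun_mul hf hg]; simp; ring

lemma differentiableAt_proj (i : Fin N) : DifferentiableAt ℝ (fun v : Fin N → ℝ => v i) u :=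
  (ContinuousLinearMap.proj i : (Fin N → ℝ) →L[ℝ] ℝ).differentiableAt

lemma pd_proj (i k : Fin N) : pd k (fun v : Fin N → ℝ => v i) u = kd i k := by
  unfold pd
  have h : (fun v : Fin N → ℝ => v i) = (ContinuousLinearMap.proj i : (Fin N → ℝ) →L[ℝ] ℝ) := rfl
  rw [h, ContinuousLinearMap.fderiv]
  simp [kd, Pi.single_apply]

end Aux

/-- For `g^{ij} = η^{is}∂H^j/∂u^s + η^{js}∂H^i/∂u^s − K₁u^iu^j` and
`b^{ij}_k = η^{is}∂²H^j/∂u^s∂u^k − K₁δ^i_k u^j`, the pair `(g, b)` satisfies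
relations (s1)–(s5) with `K = K₁` on `U` iff the functions `H^i` satisfy systems
(ass1) and (ass2) on `U`. -/
theorem stmt_2 {N : ℕ} (U : Set (Fin N → ℝ)) (hU : IsOpen U)
    (η : Matrix (Fin N) (Fin N) ℝ) (hηs : η.IsSymm) (hηi : IsUnit η.det)
    (K₁ : ℝ) (H : Fin N → (Fin N → ℝ) → ℝ)
    (hH : ∀ i, ContDiffOn ℝ (⊤ : ℕ∞) (H i) U)
    (g : Fin N → Fin N → (Fin N → ℝ) → ℝ)
    (b : Fin N → Fin N → Fin N → (Fin N → ℝ) → ℝ)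
    (hg : ∀ i j u, g i j u
        = (∑ s, η i s * pd s (H j) u) + (∑ s, η j s * pd s (H i) u) - K₁ * u i * u j)
    (hb : ∀ i j k u, b i j k u = (∑ s, η i s * pd2 s k (H j) u) - K₁ * kd i k * u j) :
    (∀ u ∈ U, RelS g b K₁ u) ↔ (∀ u ∈ U, Ass1 η H u ∧ Ass2 η K₁ H u) := by
  have pd2d : ∀ (s k : Fin N) (f : (Fin N → ℝ) → ℝ), pd2 s k f = pd k (pd s f) :=
    fun _ _ _ => rfl
  have hinv : ∀ d : Fin N → ℝ, (∀ i, (∑ p, η i p * d p) = 0) → ∀ p, d p = 0 := by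
    intro d hd
    have h0 : η.mulVec d = 0 := by
      funext i; simpa [Matrix.mulVec, dotProduct] using hd i
    have h1 : η⁻¹.mulVec (η.mulVec d) = d := by
      rw [Matrix.mulVec_mulVec, Matrix.nonsing_inv_mul η hηi, Matrix.one_mulVec]
    intro p
    have h2 := congrFun (h1.symm.trans (by rw [h0, Matrix.mulVec_zero])) p
    simpa using h2
  have key : ∀ u ∈ U, (RelS g b K₁ u ↔ (Ass1 η H u ∧ Ass2 η K₁ H u)) := by
    intro u hu
    have hsm : ∀ i, ContDiffAt ℝ (⊤ : ℕ∞) (H i) u :=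
      fun i => (hH i).contDiffAt (hU.mem_nhds hu)
    have hd1 : ∀ i s, DifferentiableAt ℝ (pd s (H i)) u :=
      fun i s => (contDiffAt_pd (hsm i) s).differentiableAt (by simp)
    have hd2 : ∀ i s k, DifferentiableAt ℝ (pd k (pd s (H i))) u :=
      fun i s k => (contDiffAt_pd (contDiffAt_pd (hsm i) s) k).differentiableAt (by simp)
    -- symmetry of g
    have hgsymm : ∀ i j, g i j u = g j i u := by
      intro i j; rw [hg, hg]; ring
    -- derivative of g
    have hgfun : ∀ i j, g i j = fun v => (∑ s, η i s * pd s (H j) v)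
        + (∑ s, η j s * pd s (H i) v) - K₁ * v i * v j := fun i j => funext (hg i j)
    have hpdg : ∀ i j k, pd k (g i j) u
        = (∑ s, η i s * pd k (pd s (H j)) u) + (∑ s, η j s * pd k (pd s (H i)) u)
          - (K₁ * kd i k * u j + K₁ * u i * kd j k) := by
      intro i j k
      have dS1 : DifferentiableAt ℝ (fun v => ∑ s, η i s * pd s (H j) v) u :=
        DifferentiableAt.fun_sum fun s _ => (hd1 j s).const_mul _
      have dS2 : DifferentiableAt ℝ (fun v => ∑ s, η j s * pd s (H i) v) u :=
        DifferentiableAt.fun_sum fun s _ => (hd1 i s).const_mul _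
      have dq1 : DifferentiableAt ℝ (fun v : Fin N → ℝ => K₁ * v i) u :=
        (differentiableAt_proj i).const_mul _
      have dq : DifferentiableAt ℝ (fun v : Fin N → ℝ => K₁ * v i * v j) u :=
        dq1.mul (differentiableAt_proj j)
      have e1 : pd k (fun v => (∑ s, η i s * pd s (H j) v) + (∑ s, η j s * pd s (H i) v)
            - K₁ * v i * v j) u
          = pd k (fun v => (∑ s, η i s * pd s (H j) v) + (∑ s, η j s * pd s (H i) v)) u
            - pd k (fun v : Fin N → ℝ => K₁ * v i * v j) u := pd_sub (dS1.add dS2) dq k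
      have e2 : pd k (fun v => (∑ s, η i s * pd s (H j) v) + (∑ s, η j s * pd s (H i) v)) u
          = pd k (fun v => ∑ s, η i s * pd s (H j) v) u
            + pd k (fun v => ∑ s, η j s * pd s (H i) v) u := pd_add dS1 dS2 k
      have e3 : pd k (fun v => ∑ s, η i s * pd s (H j) v) u
          = ∑ s, pd k (fun v => η i s * pd s (H j) v) u :=
        pd_sum Finset.univ (fun s _ => (hd1 j s).const_mul _) k
      have e4 : pd k (fun v => ∑ s, η j s * pd s (H i) v) u
          = ∑ s, pd k (fun v => η j s * pd s (H i) v) u :=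
        pd_sum Finset.univ (fun s _ => (hd1 i s).const_mul _) k
      have e5 : pd k (fun v : Fin N → ℝ => K₁ * v i * v j) u
          = pd k (fun v : Fin N → ℝ => K₁ * v i) u * u j
            + (K₁ * u i) * pd k (fun v : Fin N → ℝ => v j) u :=
        pd_mul dq1 (differentiableAt_proj j) k
      have e6 : pd k (fun v : Fin N → ℝ => K₁ * v i) u
          = K₁ * pd k (fun v : Fin N → ℝ => v i) u :=
        pd_const_mul (differentiableAt_proj i) K₁ k
      have e7 : (∑ s, pd k (fun v => η i s * pd s (H j) v) u)
          = ∑ s, η i s * pd k (pd s (H j)) u :=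
        Finset.sum_congr rfl fun s _ => pd_const_mul (hd1 j s) _ k
      have e8 : (∑ s, pd k (fun v => η j s * pd s (H i) v) u)
          = ∑ s, η j s * pd k (pd s (H i)) u :=
        Finset.sum_congr rfl fun s _ => pd_const_mul (hd1 i s) _ k
      rw [hgfun i j, e1, e2, e3, e4, e5, e6, pd_proj, pd_proj, e7, e8]
    -- derivative of b
    have hbfun : ∀ i j k, b i j k
        = fun v => (∑ s, η i s * pd k (pd s (H j)) v) - K₁ * kd i k * v j := by
      intro i j k; funext v; rw [hb i j k v]; simp only [pd2d]
    have hpdb : ∀ j r k s, pd s (b j r k) u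
        = (∑ p, η j p * pd s (pd k (pd p (H r))) u) - K₁ * kd j k * kd r s := by
      intro j r k s
      have dS : DifferentiableAt ℝ (fun v => ∑ p, η j p * pd k (pd p (H r)) v) u :=
        DifferentiableAt.fun_sum fun p _ => (hd2 r p k).const_mul _
      have dq : DifferentiableAt ℝ (fun v : Fin N → ℝ => K₁ * kd j k * v r) u :=
        (differentiableAt_proj r).const_mul _
      have e1 : pd s (fun v => (∑ p, η j p * pd k (pd p (H r)) v) - K₁ * kd j k * v r) u
          = pd s (fun v => ∑ p, η j p * pd k (pd p (H r)) v) u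
            - pd s (fun v : Fin N → ℝ => K₁ * kd j k * v r) u := pd_sub dS dq s
      have e2 : pd s (fun v => ∑ p, η j p * pd k (pd p (H r)) v) u
          = ∑ p, pd s (fun v => η j p * pd k (pd p (H r)) v) u :=
        pd_sum Finset.univ (fun p _ => (hd2 r p k).const_mul _) s
      have e3 : pd s (fun v : Fin N → ℝ => K₁ * kd j k * v r) u
          = (K₁ * kd j k) * pd s (fun v : Fin N → ℝ => v r) u :=
        pd_const_mul (differentiableAt_proj r) _ s
      have e4 : (∑ p, pd s (fun v => η j p * pd k (pd p (H r)) v) u)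
          = ∑ p, η j p * pd s (pd k (pd p (H r))) u :=
        Finset.sum_congr rfl fun p _ => pd_const_mul (hd2 r p k) _ s
      rw [hbfun j r k, e1, e2, e3, pd_proj, e4]
    have hbd : ∀ j r k s, pd s (b j r k) u - pd k (b j r s) u
        = K₁ * (kd j s * kd r k - kd j k * kd r s) := by
      intro j r k s
      have hsym : (∑ p, η j p * pd s (pd k (pd p (H r))) u)
          = ∑ p, η j p * pd k (pd s (pd p (H r))) u :=
        Finset.sum_congr rfl fun p _ => by
          rw [show pd s (pd k (pd p (H r))) u = pd k (pd s (pd p (H r))) u from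
            pd2_symm (contDiffAt_pd (hsm r) p) k s]
      rw [hpdb j r k s, hpdb j r s k, hsym]
      ring
    -- (s2)
    have hs2 : ∀ i j k, pd k (g i j) u = b i j k u + b j i k u := by
      intro i j k
      rw [hpdg i j k, hb i j k u, hb j i k u]
      simp only [pd2d]
      ring
    -- expansion for (s3)
    have hS : ∀ i j r, (∑ s, g i s u * b j r s u)
        = (∑ s, ∑ p, g i s u * η j p * pd2 p s (H r) u) - K₁ * (g i j u * u r) := by
      intro i j r
      have h1 : ∀ s, g i s u * b j r s u
          = (∑ p, g i s u * η j p * pd2 p s (H r) u) - kd j s * (K₁ * (g i s u * u r)) := by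
        intro s
        rw [hb j r s u, mul_sub, Finset.mul_sum]
        congr 1
        · exact Finset.sum_congr rfl fun p _ => by ring
        · ring
      rw [Finset.sum_congr rfl fun s _ => h1 s, Finset.sum_sub_distrib, sum_kd_left]
    have hs3_iff : (∀ i j r, (∑ s, g i s u * b j r s u) = ∑ s, g j s u * b i r s u)
        ↔ Ass2 η K₁ H u := by
      unfold Ass2
      simp only [← hg]
      constructor
      · intro h i j k
        have h0 := h i j k
        rw [hS i j k, hS j i k, hgsymm i j] at h0
        exact sub_left_inj.mp h0
      · intro h i j r
        rw [hS i j r, hS j i r, hgsymm i j, h i j r]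
    -- expansion of the quadratic terms in (s4)
    have hT : ∀ i j r k, (∑ s, b i j s u * b s r k u)
        = (∑ s, ∑ p, ∑ q, (η i p * pd2 p s (H j) u) * (η s q * pd2 q k (H r) u))
          - K₁ * (u r * ∑ p, η i p * pd2 p k (H j) u)
          - K₁ * (u j * ∑ q, η i q * pd2 q k (H r) u)
          + kd i k * (K₁ * K₁ * (u j * u r)) := by
      intro i j r k
      have h1 : ∀ s, b i j s u * b s r k u
          = (∑ p, ∑ q, (η i p * pd2 p s (H j) u) * (η s q * pd2 q k (H r) u))
            - kd s k * (K₁ * (u r * ∑ p, η i p * pd2 p s (H j) u))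
            - kd i s * (K₁ * (u j * ∑ q, η s q * pd2 q k (H r) u))
            + kd i s * (kd s k * (K₁ * K₁ * (u j * u r))) := by
        intro s
        rw [hb i j s u, hb s r k u,
          ← Finset.sum_mul_sum Finset.univ Finset.univ
            (fun p => η i p * pd2 p s (H j) u) (fun q => η s q * pd2 q k (H r) u)]
        ring
      rw [Finset.sum_congr rfl fun s _ => h1 s, Finset.sum_add_distrib,
        Finset.sum_sub_distrib, Finset.sum_sub_distrib, sum_kd_right, sum_kd_left, sum_kd_left]
    have hTriple : ∀ i j r k,
        (∑ s, ∑ p, ∑ q, (η i p * pd2 p s (H j) u) * (η s q * pd2 q k (H r) u))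
        = ∑ p, η i p * ∑ s, ∑ q, pd2 p s (H j) u * η s q * pd2 q k (H r) u := by
      intro i j r k
      rw [Finset.sum_comm]
      refine Finset.sum_congr rfl fun p _ => ?_
      rw [Finset.mul_sum]
      refine Finset.sum_congr rfl fun s _ => ?_
      rw [Finset.mul_sum]
      exact Finset.sum_congr rfl fun q _ => by ring
    -- first term of (s4)
    have hterm1 : ∀ i j r k, (∑ s, g i s u * (pd k (b j r s) u - pd s (b j r k) u))
        = K₁ * (g i r u * kd j k - g i j u * kd r k) := by
      intro i j r k
      have h1 : ∀ s, g i s u * (pd k (b j r s) u - pd s (b j r k) u)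
          = kd r s * (K₁ * kd j k * g i s u) - kd j s * (K₁ * kd r k * g i s u) := by
        intro s
        rw [hbd j r s k]
        ring
      rw [Finset.sum_congr rfl fun s _ => h1 s, Finset.sum_sub_distrib,
        sum_kd_left, sum_kd_left]
      ring
    have hs4_iff : (∀ i j r k, (∑ s, g i s u * (pd k (b j r s) u - pd s (b j r k) u))
          + (∑ s, b i j s u * b s r k u) - (∑ s, b i r s u * b s j k u)
          = K₁ * (g i r u * kd j k - g i j u * kd r k))
        ↔ ∀ i j r k, (∑ p, η i p * ∑ s, ∑ q, pd2 p s (H j) u * η s q * pd2 q k (H r) u)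
            = ∑ p, η i p * ∑ s, ∑ q, pd2 p s (H r) u * η s q * pd2 q k (H j) u := by
      constructor
      · intro h i j r k
        have h0 := h i j r k
        rw [hterm1 i j r k, hT i j r k, hT i r j k, hTriple i j r k, hTriple i r j k] at h0
        linarith
      · intro h i j r k
        rw [hterm1 i j r k, hT i j r k, hT i r j k, hTriple i j r k, hTriple i r j k,
          h i j r k]
        ring
    have hA1_iff : Ass1 η H u
        ↔ ∀ p j r k, (∑ s, ∑ q, pd2 p s (H j) u * η s q * pd2 q k (H r) u)
            = ∑ s, ∑ q, pd2 p s (H r) u * η s q * pd2 q k (H j) u := by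
      constructor
      · intro h p j r k; exact h j r p k
      · intro h i j k l; exact h k i j l
    -- (s5)
    have hs5sum : ∀ i j r p k, (∑ s, b s i p u * (pd s (b j r k) u - pd k (b j r s) u))
        = K₁ * kd r k * b j i p u - K₁ * kd j k * b r i p u := by
      intro i j r p k
      have h1 : ∀ s, b s i p u * (pd s (b j r k) u - pd k (b j r s) u)
          = kd j s * (K₁ * kd r k * b s i p u) - kd r s * (K₁ * kd j k * b s i p u) := by
        intro s
        rw [hbd j r k s]
        ring
      rw [Finset.sum_congr rfl fun s _ => h1 s, Finset.sum_sub_distrib,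
        sum_kd_left, sum_kd_left]
    have hterm5 : ∀ i j r p k, s5term b K₁ u i j r p k
        = K₁ * (kd r k * b i j p u + kd r p * b i j k u
            - kd j k * b r i p u - kd j p * b r i k u) := by
      intro i j r p k
      unfold s5term
      rw [hs5sum i j r p k, hs5sum i j r k p]
      ring
    have hs5 : ∀ i j r p k, s5term b K₁ u i j r p k + s5term b K₁ u j r i p k
        + s5term b K₁ u r i j p k = 0 := by
      intro i j r p k
      rw [hterm5 i j r p k, hterm5 j r i p k, hterm5 r i j p k]
      ring
    constructor
    · rintro ⟨h1, h2, h3, h4, h5⟩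
      refine ⟨?_, hs3_iff.mp h3⟩
      rw [hA1_iff]
      intro p j r k
      have hcon := hs4_iff.mp h4
      have hz := hinv (fun p => (∑ s, ∑ q, pd2 p s (H j) u * η s q * pd2 q k (H r) u)
          - ∑ s, ∑ q, pd2 p s (H r) u * η s q * pd2 q k (H j) u) ?_ p
      · linarith [hz]
      · intro i
        have hh := hcon i j r k
        have hsplit : (∑ p, η i p * ((∑ s, ∑ q, pd2 p s (H j) u * η s q * pd2 q k (H r) u)
            - ∑ s, ∑ q, pd2 p s (H r) u * η s q * pd2 q k (H j) u))
            = (∑ p, η i p * ∑ s, ∑ q, pd2 p s (H j) u * η s q * pd2 q k (H r) u)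
              - ∑ p, η i p * ∑ s, ∑ q, pd2 p s (H r) u * η s q * pd2 q k (H j) u := by
          rw [← Finset.sum_sub_distrib]
          exact Finset.sum_congr rfl fun p _ => by ring
        rw [hsplit, hh, sub_self]
    · rintro ⟨ha1, ha2⟩
      refine ⟨hgsymm, hs2, hs3_iff.mpr ha2, hs4_iff.mpr ?_, hs5⟩
      intro i j r k
      exact Finset.sum_congr rfl fun p _ => by rw [hA1_iff.mp ha1 p j r k]
  constructor
  · intro h u hu; exact (key u hu).mp (h u hu)
  · intro h u hu; exact (key u hu).mpr (h u hu)
end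

section
/- Let U ⊆ ℝ^N be a convex open set, let η^{ij} be a constant symmetric invertible real N×N matrix, let K₁ ∈ ℝ, and let g₁^{ij}(u), b₁^{ij}_k(u) be smooth coefficients on U such that the pair (g₁^{ij}, b₁^{ij}_k) satisfies relations (s1)–(s5) with K = K₁ on U. Then the following are equivalent: (i) for every λ ∈ ℝ the pair (g₁^{ij} + λ η^{ij}, b₁^{ij}_k) satisfies relations (s1)–(s5) with K = K₁ on U; (ii) there exist smooth functions H^1,…,H^N : U → ℝ such that g₁^{ij}(u) = Σ_s η^{is} ∂H^j/∂u^s + Σ_s η^{js} ∂H^i/∂u^s − K₁ u^i u^j and b₁^{ij}_k(u) = Σ_s η^{is} ∂²H^j/∂u^s∂u^k − K₁ δ^i_k u^j on U. -/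
open Set Metric MeasureTheory intervalIntegral Filter Interval

namespace StmtAux

variable {N : ℕ}

lemma sum_single_eq (v : Fin N → ℝ) :
    ∑ k, v k • (Pi.single k 1 : Fin N → ℝ) = v := by
  funext j
  simp [Finset.sum_apply, Pi.single_apply]

lemma clm_eq_sum (L : (Fin N → ℝ) →L[ℝ] ℝ) (v : Fin N → ℝ) :
    L v = ∑ k, v k * L (Pi.single k 1) := by
  conv_lhs => rw [← sum_single_eq v]
  rw [map_sum]
  exact Finset.sum_congr rfl fun k _ => by rw [L.map_smul, smul_eq_mul]

lemma pd_hasFDerivAt {f : (Fin N → ℝ) → ℝ} {L : (Fin N → ℝ) →L[ℝ] ℝ} {u : Fin N → ℝ}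
    (h : HasFDerivAt f L u) (k : Fin N) : pd k f u = L (Pi.single k 1) := by
  rw [pd, h.fderiv]

lemma smooth_diffAt {f : (Fin N → ℝ) → ℝ} {U : Set (Fin N → ℝ)} (hU : IsOpen U)
    (hf : ContDiffOn ℝ (⊤:ℕ∞) f U) {u : Fin N → ℝ} (hu : u ∈ U) :
    DifferentiableAt ℝ f u :=
  ((hf u hu).contDiffAt (hU.mem_nhds hu)).differentiableAt (by simp)

lemma pd_congr {f g : (Fin N → ℝ) → ℝ} {u : Fin N → ℝ} (k : Fin N)
    (h : f =ᶠ[nhds u] g) : pd k f u = pd k g u := by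
  unfold pd; rw [h.fderiv_eq]

lemma pd_congrOn {f g : (Fin N → ℝ) → ℝ} {U : Set (Fin N → ℝ)} (hU : IsOpen U)
    (h : ∀ v ∈ U, f v = g v) {u : Fin N → ℝ} (hu : u ∈ U) (k : Fin N) :
    pd k f u = pd k g u :=
  pd_congr k (Filter.eventuallyEq_of_mem (hU.mem_nhds hu) h)

lemma pd_add_const {f : (Fin N → ℝ) → ℝ} (c : ℝ) (u : Fin N → ℝ) (k : Fin N) :
    pd k (fun v => f v + c) u = pd k f u := by
  unfold pd; rw [fderiv_add_const]

lemma pd_coord (j k : Fin N) (u : Fin N → ℝ) : pd k (fun v => v j) u = kd j k := by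
  have h : HasFDerivAt (fun v : Fin N → ℝ => v j)
      (ContinuousLinearMap.proj (R := ℝ) (φ := fun _ : Fin N => ℝ) j) u :=
    (ContinuousLinearMap.proj (R := ℝ) (φ := fun _ : Fin N => ℝ) j).hasFDerivAt
  rw [pd_hasFDerivAt h]
  simp [ContinuousLinearMap.proj_apply, Pi.single_apply, kd]

lemma pd_sum {ι : Type*} (s : Finset ι) (F : ι → (Fin N → ℝ) → ℝ) {u : Fin N → ℝ}
    (hF : ∀ i ∈ s, DifferentiableAt ℝ (F i) u) (k : Fin N) :
    pd k (fun v => ∑ i ∈ s, F i v) u = ∑ i ∈ s, pd k (F i) u := by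
  unfold pd; rw [fderiv_fun_sum hF, ContinuousLinearMap.sum_apply]

lemma pd_const_mul {f : (Fin N → ℝ) → ℝ} {u : Fin N → ℝ} (hf : DifferentiableAt ℝ f u)
    (c : ℝ) (k : Fin N) : pd k (fun v => c * f v) u = c * pd k f u := by
  unfold pd; rw [fderiv_const_mul hf c]; simp

lemma pd_sub {f g : (Fin N → ℝ) → ℝ} {u : Fin N → ℝ} (hf : DifferentiableAt ℝ f u)
    (hg : DifferentiableAt ℝ g u) (k : Fin N) :
    pd k (fun v => f v - g v) u = pd k f u - pd k g u := by
  unfold pd; rw [fderiv_fun_sub hf hg]; simp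

lemma pd_add {f g : (Fin N → ℝ) → ℝ} {u : Fin N → ℝ} (hf : DifferentiableAt ℝ f u)
    (hg : DifferentiableAt ℝ g u) (k : Fin N) :
    pd k (fun v => f v + g v) u = pd k f u + pd k g u := by
  unfold pd; rw [fderiv_fun_add hf hg]; simp

lemma diff_coord (j : Fin N) (u : Fin N → ℝ) :
    DifferentiableAt ℝ (fun v : Fin N → ℝ => v j) u :=
  (ContinuousLinearMap.proj (R := ℝ) (φ := fun _ : Fin N => ℝ) j).differentiableAt

lemma pd_coord_mul_coord (K : ℝ) (i j k : Fin N) (u : Fin N → ℝ) :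
    pd k (fun v => K * v i * v j) u = K * (kd i k * u j + u i * kd j k) := by
  have h1 : DifferentiableAt ℝ (fun v : Fin N → ℝ => K * v i) u :=
    (diff_coord i u).const_mul K
  have h2 := diff_coord j u
  have : (fun v : Fin N → ℝ => K * v i * v j) = fun v => (K * v i) * v j := rfl
  unfold pd
  rw [this, fderiv_fun_mul h1 h2]
  simp only [ContinuousLinearMap.add_apply, ContinuousLinearMap.smul_apply]
  have e1 : fderiv ℝ (fun v : Fin N → ℝ => K * v i) u (Pi.single k 1) = K * kd i k := by
    rw [fderiv_const_mul (diff_coord i u) K]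
    rw [ContinuousLinearMap.smul_apply, smul_eq_mul]
    exact congrArg (fun x => K * x) (pd_coord i k u)
  have e2 : fderiv ℝ (fun v : Fin N → ℝ => v j) u (Pi.single k 1) = kd j k := pd_coord j k u
  rw [e1, e2]; simp only [smul_eq_mul]; ring

end StmtAux

namespace StmtAux

variable {N : ℕ}

/-- Condition (A): `η`-analogue of (s3). -/
def condA (η : Matrix (Fin N) (Fin N) ℝ) (b : Fin N → Fin N → Fin N → (Fin N → ℝ) → ℝ)
    (u : Fin N → ℝ) : Prop :=
  ∀ i j r, ∑ s, η i s * b j r s u = ∑ s, η j s * b i r s u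

/-- Condition (B): `η`-analogue of (s4). -/
def condB (η : Matrix (Fin N) (Fin N) ℝ) (b : Fin N → Fin N → Fin N → (Fin N → ℝ) → ℝ)
    (K : ℝ) (u : Fin N → ℝ) : Prop :=
  ∀ i j r k, ∑ s, η i s * (pd k (b j r s) u - pd s (b j r k) u)
    = K * (η i r * kd j k - η i j * kd r k)

lemma expand_sum (lam : ℝ) (c d e : Fin N → ℝ) :
    ∑ s, (c s + lam * e s) * d s = (∑ s, c s * d s) + lam * ∑ s, e s * d s := by
  rw [Finset.mul_sum, ← Finset.sum_add_distrib]
  exact Finset.sum_congr rfl fun s _ => by ring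

lemma relS_shift {g : Fin N → Fin N → (Fin N → ℝ) → ℝ}
    {b : Fin N → Fin N → Fin N → (Fin N → ℝ) → ℝ} {K : ℝ} {u : Fin N → ℝ}
    {η : Matrix (Fin N) (Fin N) ℝ} (hηs : η.IsSymm)
    (h0 : RelS g b K u) (hA : condA η b u) (hB : condB η b K u) (lam : ℝ) :
    RelS (fun i j v => g i j v + lam * η i j) b K u := by
  obtain ⟨h1, h2, h3, h4, h5⟩ := h0
  refine ⟨?_, ?_, ?_, ?_, h5⟩
  · intro i j
    show g i j u + lam * η i j = g j i u + lam * η j i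
    rw [h1 i j, hηs.apply i j]
  · intro i j k; rw [pd_add_const]; exact h2 i j k
  · intro i j r
    rw [expand_sum lam (fun s => g i s u) (fun s => b j r s u) (fun s => η i s),
      expand_sum lam (fun s => g j s u) (fun s => b i r s u) (fun s => η j s),
      h3 i j r, hA i j r]
  · intro i j r k
    have e1 := expand_sum lam (fun s => g i s u)
      (fun s => pd k (b j r s) u - pd s (b j r k) u) (fun s => η i s)
    simp only at e1 ⊢
    rw [e1]
    have h4x := h4 i j r k
    have hb := hB i j r k
    linear_combination h4x + lam * hb

lemma conds_of_relS_one {g : Fin N → Fin N → (Fin N → ℝ) → ℝ}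
    {b : Fin N → Fin N → Fin N → (Fin N → ℝ) → ℝ} {K : ℝ} {u : Fin N → ℝ}
    {η : Matrix (Fin N) (Fin N) ℝ}
    (h0 : RelS g b K u) (h1 : RelS (fun i j v => g i j v + 1 * η i j) b K u) :
    condA η b u ∧ condB η b K u := by
  obtain ⟨_, _, h3, h4, _⟩ := h0
  obtain ⟨_, _, h3', h4', _⟩ := h1
  constructor
  · intro i j r
    have e1 := expand_sum (N := N) 1 (fun s => g i s u) (fun s => b j r s u) (fun s => η i s)
    have e2 := expand_sum (N := N) 1 (fun s => g j s u) (fun s => b i r s u) (fun s => η j s)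
    have := h3' i j r
    simp only at this e1 e2
    rw [e1, e2] at this
    have h3x := h3 i j r
    linear_combination this - h3x
  · intro i j r k
    have e1 := expand_sum (N := N) 1 (fun s => g i s u)
      (fun s => pd k (b j r s) u - pd s (b j r k) u) (fun s => η i s)
    have := h4' i j r k
    simp only at this e1
    rw [e1] at this
    have h4x := h4 i j r k
    linear_combination this - h4x

end StmtAux

set_option maxHeartbeats 1000000

namespace StmtAux

variable {N : ℕ}

lemma clm_ext_basis {L M : (Fin N → ℝ) →L[ℝ] ℝ}
    (h : ∀ k, L (Pi.single k 1) = M (Pi.single k 1)) : L = M := by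
  ext v
  rw [clm_eq_sum L v, clm_eq_sum M v]
  exact Finset.sum_congr rfl fun k _ => by rw [h k]

lemma contOn_comp_seg {β : Type*} [TopologicalSpace β] {U : Set (Fin N → ℝ)}
    {g : (Fin N → ℝ) → β} (hg : ContinuousOn g U) (x₀ x : Fin N → ℝ)
    (hmem : ∀ t ∈ Icc (0:ℝ) 1, x₀ + t • (x - x₀) ∈ U) :
    ContinuousOn (fun t : ℝ => g (x₀ + t • (x - x₀))) (Icc 0 1) :=
  ContinuousOn.comp hg (Continuous.continuousOn (by fun_prop)) hmem

lemma poincare {U : Set (Fin N → ℝ)} (hUo : IsOpen U) (hUc : Convex ℝ U)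
    {x₀ : Fin N → ℝ} (hx₀ : x₀ ∈ U) (f : Fin N → (Fin N → ℝ) → ℝ)
    (hf : ∀ k, ContDiffOn ℝ (⊤:ℕ∞) (f k) U)
    (hsym : ∀ p k, ∀ u ∈ U, pd p (f k) u = pd k (f p) u) :
    ∃ F : (Fin N → ℝ) → ℝ, ContDiffOn ℝ (⊤:ℕ∞) F U ∧
      ∀ k, ∀ u ∈ U, pd k F u = f k u := by
  classical
  set γ : ℝ → (Fin N → ℝ) → (Fin N → ℝ) := fun t x => x₀ + t • (x - x₀) with hγ
  have hγU : ∀ t ∈ Icc (0:ℝ) 1, ∀ x ∈ U, γ t x ∈ U := by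
    intro t ht x hx
    have h1 : γ t x = (1 - t) • x₀ + t • x := by
      simp only [hγ]; module
    rw [h1]
    exact hUc hx₀ hx (by linarith [ht.2]) ht.1 (by ring)
  set F : (Fin N → ℝ) → ℝ :=
    fun x => ∫ t in (0:ℝ)..1, ∑ k, f k (γ t x) * (x k - x₀ k) with hF
  set Lmap : (Fin N → ℝ) → ((Fin N → ℝ) →L[ℝ] ℝ) :=
    fun v => ∑ k, f k v • ContinuousLinearMap.proj (R := ℝ) (φ := fun _ : Fin N => ℝ) k
    with hLmap
  have hdf : ∀ k, ContDiffOn ℝ (⊤:ℕ∞) (fderiv ℝ (f k)) U := by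
    intro k
    exact (hf k).fderiv_of_isOpen hUo (by simp)
  have key : ∀ u ∈ U, HasFDerivAt F (Lmap u) u := by
    intro u hu
    obtain ⟨ε, εpos, hball⟩ : ∃ ε > 0, closedBall u ε ⊆ U :=
      (Metric.nhds_basis_closedBall.mem_iff).1 (hUo.mem_nhds hu)
    have hmemx : ∀ x ∈ closedBall u ε, ∀ t ∈ Icc (0:ℝ) 1, γ t x ∈ U :=
      fun x hx t ht => hγU t ht x (hball hx)
    -- compact set of curve points
    set S : Set (Fin N → ℝ) :=
      (fun p : ℝ × (Fin N → ℝ) => γ p.1 p.2) '' (Icc (0:ℝ) 1 ×ˢ closedBall u ε) with hS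
    have hScomp : IsCompact S :=
      ((isCompact_Icc).prod (isCompact_closedBall u ε)).image (by fun_prop)
    have hSU : S ⊆ U := by
      rintro y ⟨⟨t, x⟩, ⟨ht, hx⟩, rfl⟩
      exact hmemx x hx t ht
    have hSmem : ∀ t ∈ Icc (0:ℝ) 1, ∀ x ∈ closedBall u ε, γ t x ∈ S :=
      fun t ht x hx => ⟨(t, x), ⟨ht, hx⟩, rfl⟩
    choose C1 hC1 using fun k =>
      hScomp.exists_bound_of_continuousOn ((hf k).continuousOn.mono hSU)
    choose C2 hC2 using fun k =>
      hScomp.exists_bound_of_continuousOn ((hdf k).continuousOn.mono hSU)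
    set R : ℝ := ‖u - x₀‖ + ε with hR
    set Φ : (Fin N → ℝ) → ℝ → ((Fin N → ℝ) →L[ℝ] ℝ) := fun x t =>
      ∑ k, (f k (γ t x) • ContinuousLinearMap.proj (R := ℝ) (φ := fun _ : Fin N => ℝ) k
        + (x k - x₀ k) • ((fderiv ℝ (f k) (γ t x)).comp
            (t • ContinuousLinearMap.id ℝ (Fin N → ℝ)))) with hΦ
    have hIsub : Ι (0:ℝ) 1 ⊆ Icc (0:ℝ) 1 := by
      rw [Set.uIoc_of_le (by norm_num : (0:ℝ) ≤ 1)]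
      exact Set.Ioc_subset_Icc_self
    have huIcc : Set.uIcc (0:ℝ) 1 = Icc (0:ℝ) 1 := Set.uIcc_of_le (by norm_num)
    -- differentiability of the integrand in x
    have hdiff : ∀ t ∈ Ι (0:ℝ) 1, ∀ x ∈ ball u ε,
        HasFDerivAt (fun y => ∑ k, f k (γ t y) * (y k - x₀ k)) (Φ x t) x := by
      intro t ht x hx
      have hxU : ∀ y ∈ closedBall u ε, True := fun _ _ => trivial
      have hγtx : γ t x ∈ U := hmemx x (ball_subset_closedBall hx) t (hIsub ht)
      apply HasFDerivAt.fun_sum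
      intro k _
      have hin : HasFDerivAt (fun y : Fin N → ℝ => γ t y)
          (t • ContinuousLinearMap.id ℝ (Fin N → ℝ)) x :=
        (((hasFDerivAt_id x).sub_const x₀).const_smul t).const_add x₀
      have hfk : HasFDerivAt (f k) (fderiv ℝ (f k) (γ t x)) (γ t x) :=
        (smooth_diffAt hUo (hf k) hγtx).hasFDerivAt
      have hcomp : HasFDerivAt (fun y => f k (γ t y))
          ((fderiv ℝ (f k) (γ t x)).comp (t • ContinuousLinearMap.id ℝ (Fin N → ℝ))) x :=
        hfk.comp x hin
      have hcoord : HasFDerivAt (fun y : Fin N → ℝ => y k - x₀ k)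
          (ContinuousLinearMap.proj (R := ℝ) (φ := fun _ : Fin N => ℝ) k) x :=
        (ContinuousLinearMap.proj (R := ℝ) (φ := fun _ : Fin N => ℝ) k).hasFDerivAt.sub_const
          (x₀ k)
      exact hcomp.mul hcoord
    -- bound
    have hbound : ∀ t ∈ Ι (0:ℝ) 1, ∀ x ∈ ball u ε,
        ‖Φ x t‖ ≤ ∑ k, (C1 k + R * C2 k) := by
      intro t ht x hx
      have htI : t ∈ Icc (0:ℝ) 1 := hIsub ht
      have habs : |t| ≤ 1 := by
        rw [abs_of_nonneg htI.1]; exact htI.2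
      have hmemS : γ t x ∈ S := hSmem t htI x (ball_subset_closedBall hx)
      refine le_trans (norm_sum_le _ _) (Finset.sum_le_sum fun k _ => ?_)
      refine le_trans (norm_add_le _ _) ?_
      have hprojn : ‖(ContinuousLinearMap.proj (R := ℝ) (φ := fun _ : Fin N => ℝ) k :
          (Fin N → ℝ) →L[ℝ] ℝ)‖ ≤ 1 := by
        refine ContinuousLinearMap.opNorm_le_bound _ zero_le_one fun v => ?_
        rw [one_mul]
        simpa using norm_le_pi_norm v k
      have h1 : ‖f k (γ t x) • (ContinuousLinearMap.proj (R := ℝ)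
          (φ := fun _ : Fin N => ℝ) k : (Fin N → ℝ) →L[ℝ] ℝ)‖ ≤ C1 k := by
        refine le_trans (ContinuousLinearMap.opNorm_smul_le _ _) ?_
        have ha := hC1 k _ hmemS
        have hc : (0:ℝ) ≤ ‖f k (γ t x)‖ := norm_nonneg _
        nlinarith [hprojn, norm_nonneg (ContinuousLinearMap.proj (R := ℝ)
          (φ := fun _ : Fin N => ℝ) k : (Fin N → ℝ) →L[ℝ] ℝ)]
      have hxk : |x k - x₀ k| ≤ R := by
        have h2 : |x k - x₀ k| ≤ ‖x - x₀‖ := by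
          simpa using norm_le_pi_norm (x - x₀) k
        have h3 : ‖x - x₀‖ ≤ ‖x - u‖ + ‖u - x₀‖ := norm_sub_le_norm_sub_add_norm_sub x u x₀
        have h4 : ‖x - u‖ ≤ ε := le_of_lt (mem_ball_iff_norm.1 hx)
        rw [hR]; linarith
      have h2 : ‖(x k - x₀ k) • ((fderiv ℝ (f k) (γ t x)).comp
          (t • ContinuousLinearMap.id ℝ (Fin N → ℝ)))‖ ≤ R * C2 k := by
        refine le_trans (ContinuousLinearMap.opNorm_smul_le _ _) ?_
        have hcompn : ‖(fderiv ℝ (f k) (γ t x)).comp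
            (t • ContinuousLinearMap.id ℝ (Fin N → ℝ))‖ ≤ C2 k := by
          refine le_trans (ContinuousLinearMap.opNorm_comp_le _ _) ?_
          have hidn : ‖t • ContinuousLinearMap.id ℝ (Fin N → ℝ)‖ ≤ 1 := by
            refine le_trans (ContinuousLinearMap.opNorm_smul_le _ _) ?_
            have := ContinuousLinearMap.norm_id_le (E := Fin N → ℝ) (𝕜 := ℝ)
            have h0 : (0:ℝ) ≤ ‖t‖ := norm_nonneg _
            have hta : ‖t‖ ≤ 1 := by rw [Real.norm_eq_abs]; exact habs
            nlinarith [norm_nonneg (ContinuousLinearMap.id ℝ (Fin N → ℝ))]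
          have hb := hC2 k _ hmemS
          nlinarith [norm_nonneg (fderiv ℝ (f k) (γ t x)),
            norm_nonneg (t • ContinuousLinearMap.id ℝ (Fin N → ℝ))]
        have hxk' : ‖x k - x₀ k‖ ≤ R := by rw [Real.norm_eq_abs]; exact hxk
        have hRnn : (0:ℝ) ≤ R := le_trans (norm_nonneg _) hxk'
        nlinarith [norm_nonneg (x k - x₀ k), norm_nonneg ((fderiv ℝ (f k) (γ t x)).comp
            (t • ContinuousLinearMap.id ℝ (Fin N → ℝ)))]
      linarith
    -- measurability statements
    have hcont_integrand : ∀ x ∈ closedBall u ε,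
        ContinuousOn (fun t => ∑ k, f k (γ t x) * (x k - x₀ k)) (Icc (0:ℝ) 1) := by
      intro x hx
      apply continuousOn_finset_sum
      intro k _
      exact (contOn_comp_seg (hf k).continuousOn x₀ x (hmemx x hx)).mul continuousOn_const
    have hF_meas : ∀ᶠ x in nhds u, AEStronglyMeasurable
        (fun t => ∑ k, f k (γ t x) * (x k - x₀ k)) (volume.restrict (Ι (0:ℝ) 1)) := by
      filter_upwards [Metric.closedBall_mem_nhds u εpos] with x hx
      exact ((hcont_integrand x hx).mono hIsub).aestronglyMeasurable measurableSet_uIoc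
    have huball : u ∈ closedBall u ε := mem_closedBall_self (le_of_lt εpos)
    have hF_int : IntervalIntegrable (fun t => ∑ k, f k (γ t u) * (u k - x₀ k))
        volume 0 1 := by
      apply ContinuousOn.intervalIntegrable
      rw [huIcc]; exact hcont_integrand u huball
    have hΦcont : ContinuousOn (fun t => Φ u t) (Icc (0:ℝ) 1) := by
      apply continuousOn_finset_sum
      intro k _
      apply ContinuousOn.add
      · exact (contOn_comp_seg (hf k).continuousOn x₀ u (hmemx u huball)).smul
          continuousOn_const
      · refine ContinuousOn.fun_smul continuousOn_const ?_
        refine ContinuousOn.clm_comp ?_ ?_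
        · exact contOn_comp_seg (hdf k).continuousOn x₀ u (hmemx u huball)
        · exact Continuous.continuousOn (by fun_prop)
    have hF'_meas : AEStronglyMeasurable (fun t => Φ u t)
        (volume.restrict (Ι (0:ℝ) 1)) :=
      (hΦcont.mono hIsub).aestronglyMeasurable measurableSet_uIoc
    have hmain := intervalIntegral.hasFDerivAt_integral_of_dominated_of_fderiv_le
      (μ := volume) (𝕜 := ℝ) (F' := Φ) (bound := fun _ => ∑ k, (C1 k + R * C2 k))
      (Metric.ball_mem_nhds u εpos) hF_meas hF_int hF'_meas
      (Filter.Eventually.of_forall hbound) intervalIntegrable_const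
      (Filter.Eventually.of_forall hdiff)
    -- identify the derivative
    have hΦint : IntervalIntegrable (fun t => Φ u t) volume 0 1 := by
      apply ContinuousOn.intervalIntegrable; rw [huIcc]; exact hΦcont
    have hval : (∫ t in (0:ℝ)..1, Φ u t) = Lmap u := by
      apply clm_ext_basis
      intro p
      rw [ContinuousLinearMap.intervalIntegral_apply hΦint (Pi.single p 1)]
      -- pointwise identification of the integrand with a total derivative
      set ψ : ℝ → ℝ := fun t => t * f p (γ t u) with hψ
      set ψ' : ℝ → ℝ := fun t =>
        f p (γ t u) + t * (fderiv ℝ (f p) (γ t u)) (u - x₀) with hψ'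
      have hγmem : ∀ t ∈ Icc (0:ℝ) 1, γ t u ∈ U := hmemx u huball
      have heq : ∀ t ∈ Set.uIcc (0:ℝ) 1, (Φ u t) (Pi.single p 1) = ψ' t := by
        intro t ht
        rw [huIcc] at ht
        have hγtu : γ t u ∈ U := hγmem t ht
        simp only [hΦ, ContinuousLinearMap.sum_apply, ContinuousLinearMap.add_apply,
          ContinuousLinearMap.smul_apply, ContinuousLinearMap.coe_comp', Function.comp_apply,
          ContinuousLinearMap.proj_apply, ContinuousLinearMap.coe_smul',
          ContinuousLinearMap.coe_id', Pi.smul_apply, id_eq, smul_eq_mul]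
        rw [Finset.sum_add_distrib]
        have e1 : ∑ k, f k (γ t u) * (Pi.single p 1 : Fin N → ℝ) k = f p (γ t u) := by
          simp [Pi.single_apply]
        have e2 : ∑ k, (u k - x₀ k) * (fderiv ℝ (f k) (γ t u)) (t • (Pi.single p 1 : Fin N → ℝ))
            = t * (fderiv ℝ (f p) (γ t u)) (u - x₀) := by
          have e3 : ∀ k : Fin N, (fderiv ℝ (f k) (γ t u)) (t • (Pi.single p 1 : Fin N → ℝ))
              = t * pd p (f k) (γ t u) := by
            intro k
            rw [(fderiv ℝ (f k) (γ t u)).map_smul, smul_eq_mul, pd]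
          rw [clm_eq_sum (fderiv ℝ (f p) (γ t u)) (u - x₀), Finset.mul_sum]
          refine Finset.sum_congr rfl fun k _ => ?_
          rw [e3 k, hsym p k (γ t u) hγtu]
          show (u k - x₀ k) * (t * pd k (f p) (γ t u))
            = t * ((u - x₀) k * pd k (f p) (γ t u))
          have : (u - x₀) k = u k - x₀ k := rfl
          rw [this]; ring
        rw [e1, e2]
      have hψderiv : ∀ t ∈ Set.uIcc (0:ℝ) 1, HasDerivAt ψ (ψ' t) t := by
        intro t ht
        rw [huIcc] at ht
        have hγtu : γ t u ∈ U := hγmem t ht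
        have hγd : HasDerivAt (fun s : ℝ => γ s u) (u - x₀) t := by
          have h1 : HasDerivAt (fun s : ℝ => s • (u - x₀)) ((1:ℝ) • (u - x₀)) t :=
            (hasDerivAt_id t).smul_const (u - x₀)
          have h2 := h1.const_add x₀
          rw [one_smul] at h2; exact h2
        have hfp : HasFDerivAt (f p) (fderiv ℝ (f p) (γ t u)) (γ t u) :=
          (smooth_diffAt hUo (hf p) hγtu).hasFDerivAt
        have hcomp : HasDerivAt (fun s : ℝ => f p (γ s u))
            ((fderiv ℝ (f p) (γ t u)) (u - x₀)) t := hfp.comp_hasDerivAt t hγd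
        have := (hasDerivAt_id t).fun_mul hcomp
        simpa [hψ, hψ'] using this
      have hψ'int : IntervalIntegrable ψ' volume 0 1 := by
        apply ContinuousOn.intervalIntegrable
        rw [huIcc]
        apply ContinuousOn.add
        · exact contOn_comp_seg (hf p).continuousOn x₀ u hγmem
        · refine ContinuousOn.mul (continuous_id.continuousOn) ?_
          refine ContinuousOn.clm_apply ?_ continuousOn_const
          exact contOn_comp_seg (hdf p).continuousOn x₀ u hγmem
      rw [intervalIntegral.integral_congr heq,
        intervalIntegral.integral_eq_sub_of_hasDerivAt hψderiv hψ'int]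
      have hγ1 : γ 1 u = u := by simp only [hγ]; module
      have hγ0 : γ 0 u = x₀ := by simp only [hγ]; module
      simp only [hψ, hγ1, hγ0, one_mul, zero_mul, sub_zero]
      -- (Lmap u) (single p 1) = f p u
      simp only [hLmap, ContinuousLinearMap.sum_apply, ContinuousLinearMap.smul_apply,
        ContinuousLinearMap.proj_apply, smul_eq_mul]
      rw [eq_comm]
      simp [Pi.single_apply]
    rw [hval] at hmain
    exact hmain
  -- assemble
  refine ⟨F, ?_, ?_⟩
  · rw [contDiffOn_infty_iff_fderiv_of_isOpen hUo]
    constructor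
    · exact fun u hu => (key u hu).differentiableAt.differentiableWithinAt
    · have hLsmooth : ContDiffOn ℝ (⊤:ℕ∞) Lmap U := by
        apply ContDiffOn.sum
        intro k _
        exact ContDiffOn.smul (hf k) contDiffOn_const
      exact hLsmooth.congr fun u hu => (key u hu).fderiv
  · intro k u hu
    rw [pd_hasFDerivAt (key u hu) k]
    simp only [hLmap, ContinuousLinearMap.sum_apply, ContinuousLinearMap.smul_apply,
      ContinuousLinearMap.proj_apply, smul_eq_mul]
    simp [Pi.single_apply]

end StmtAux

namespace StmtAux

variable {N : ℕ}

lemma two_le_inf : (2:WithTop ℕ∞) ≤ ((⊤:ℕ∞) : WithTop ℕ∞) :=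
  le_of_lt (WithTop.coe_lt_coe.mpr (by exact_mod_cast WithTop.coe_lt_top 2))

lemma kd_symm (i j : Fin N) : kd i j = kd j i := by
  unfold kd
  by_cases h : i = j
  · simp [h]
  · rw [if_neg h, if_neg fun h' => h h'.symm]

lemma sum_mul_kd (c : Fin N → ℝ) (j : Fin N) : ∑ s, c s * kd j s = c j := by
  simp [kd, eq_comm, Finset.sum_ite_eq]

lemma sum_mul_kd' (c : Fin N → ℝ) (j : Fin N) : ∑ s, c s * kd s j = c j := by
  simp [kd, Finset.sum_ite_eq]

lemma pd_smoothOn {U : Set (Fin N → ℝ)} (hUo : IsOpen U) {φ : (Fin N → ℝ) → ℝ}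
    (hφ : ContDiffOn ℝ (⊤:ℕ∞) φ U) (m : Fin N) :
    ContDiffOn ℝ (⊤:ℕ∞) (pd m φ) U := by
  have h1 : ContDiffOn ℝ (⊤:ℕ∞) (fderiv ℝ φ) U := hφ.fderiv_of_isOpen hUo (by simp)
  exact h1.clm_apply contDiffOn_const

lemma pd2_eq {U : Set (Fin N → ℝ)} (hUo : IsOpen U) {φ : (Fin N → ℝ) → ℝ}
    (hφ : ContDiffOn ℝ (⊤:ℕ∞) φ U) {u : Fin N → ℝ} (hu : u ∈ U) (s k : Fin N) :
    pd2 s k φ u = (fderiv ℝ (fderiv ℝ φ) u) (Pi.single k 1) (Pi.single s 1) := by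
  have hdf : ContDiffOn ℝ (⊤:ℕ∞) (fderiv ℝ φ) U := hφ.fderiv_of_isOpen hUo (by simp)
  have hd2 : DifferentiableAt ℝ (fderiv ℝ φ) u :=
    ((hdf u hu).contDiffAt (hUo.mem_nhds hu)).differentiableAt (by simp)
  have hcomp : HasFDerivAt (fun v => fderiv ℝ φ v (Pi.single s 1))
      ((ContinuousLinearMap.apply ℝ ℝ (Pi.single s 1 : Fin N → ℝ)).comp
        (fderiv ℝ (fderiv ℝ φ) u)) u :=
    (ContinuousLinearMap.apply ℝ ℝ (Pi.single s 1 : Fin N → ℝ)).hasFDerivAt.comp u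
      hd2.hasFDerivAt
  have hps : pd s φ = fun v => fderiv ℝ φ v (Pi.single s 1) := rfl
  rw [pd2, hps, pd_hasFDerivAt hcomp]
  rfl

lemma pd2_symm {U : Set (Fin N → ℝ)} (hUo : IsOpen U) {φ : (Fin N → ℝ) → ℝ}
    (hφ : ContDiffOn ℝ (⊤:ℕ∞) φ U) {u : Fin N → ℝ} (hu : u ∈ U) (s k : Fin N) :
    pd2 s k φ u = pd2 k s φ u := by
  have hsym : IsSymmSndFDerivAt ℝ φ u :=
    ((hφ u hu).contDiffAt (hUo.mem_nhds hu)).isSymmSndFDerivAt (by rw [minSmoothness_of_isRCLikeNormedField]; exact two_le_inf)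
  rw [pd2_eq hUo hφ hu s k, pd2_eq hUo hφ hu k s]
  exact hsym.eq _ _

/-- third-derivative symmetry in the two outer indices -/
lemma pd2_pd_symm {U : Set (Fin N → ℝ)} (hUo : IsOpen U) {φ : (Fin N → ℝ) → ℝ}
    (hφ : ContDiffOn ℝ (⊤:ℕ∞) φ U) {u : Fin N → ℝ} (hu : u ∈ U) (m s k : Fin N) :
    pd k (pd2 m s φ) u = pd s (pd2 m k φ) u := by
  have hψ : ContDiffOn ℝ (⊤:ℕ∞) (pd m φ) U := pd_smoothOn hUo hφ m
  have h1 : pd2 m s φ = pd s (pd m φ) := rfl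
  have h2 : pd2 m k φ = pd k (pd m φ) := rfl
  rw [h1, h2]
  exact pd2_symm hUo hψ hu s k

end StmtAux

namespace StmtAux

variable {N : ℕ}

lemma conds_of_H {U : Set (Fin N → ℝ)} (hUo : IsOpen U)
    (η : Matrix (Fin N) (Fin N) ℝ) (hηs : η.IsSymm) (K₁ : ℝ)
    (b₁ : Fin N → Fin N → Fin N → (Fin N → ℝ) → ℝ)
    (H : Fin N → (Fin N → ℝ) → ℝ)
    (hHsm : ∀ i, ContDiffOn ℝ (⊤:ℕ∞) (H i) U)
    (hb : ∀ i j k, ∀ u ∈ U, b₁ i j k u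
      = (∑ s, η i s * pd2 s k (H j) u) - K₁ * kd i k * u j)
    {u : Fin N → ℝ} (hu : u ∈ U) : condA η b₁ u ∧ condB η b₁ K₁ u := by
  constructor
  · intro i j r
    have expand : ∀ i' j' : Fin N, ∑ s, η i' s * b₁ j' r s u
        = (∑ s, ∑ m, η i' s * (η j' m * pd2 m s (H r) u)) - K₁ * η i' j' * u r := by
      intro i' j'
      have e0 : ∀ s, η i' s * b₁ j' r s u
          = (∑ m, η i' s * (η j' m * pd2 m s (H r) u))
            - (η i' s * (K₁ * u r)) * kd j' s := by
        intro s
        rw [hb j' r s u hu, mul_sub, Finset.mul_sum]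
        congr 1
        ring
      rw [Finset.sum_congr rfl fun s _ => e0 s, Finset.sum_sub_distrib,
        sum_mul_kd (fun s => η i' s * (K₁ * u r)) j']
      ring
    rw [expand i j, expand j i]
    have hP : (∑ s, ∑ m, η i s * (η j m * pd2 m s (H r) u))
        = ∑ s, ∑ m, η j s * (η i m * pd2 m s (H r) u) := by
      rw [Finset.sum_comm]
      refine Finset.sum_congr rfl fun s _ => Finset.sum_congr rfl fun m _ => ?_
      rw [pd2_symm hUo (hHsm r) hu s m]
      ring
    rw [hP, hηs.apply i j]
  · intro i j r k
    have hdm : ∀ m s, DifferentiableAt ℝ (pd2 m s (H r)) u := fun m s =>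
      smooth_diffAt hUo (pd_smoothOn hUo (pd_smoothOn hUo (hHsm r) m) s) hu
    have hpd : ∀ s k' : Fin N, pd k' (b₁ j r s) u
        = (∑ m, η j m * pd k' (pd2 m s (H r)) u) - K₁ * kd j s * kd r k' := by
      intro s k'
      rw [pd_congrOn hUo (fun v hv => hb j r s v hv) hu k']
      have hS : DifferentiableAt ℝ (fun v => ∑ m, η j m * pd2 m s (H r) v) u := by
        apply DifferentiableAt.fun_sum
        intro m _
        exact (hdm m s).const_mul (η j m)
      have hT : DifferentiableAt ℝ (fun v : Fin N → ℝ => K₁ * kd j s * v r) u :=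
        (diff_coord r u).const_mul (K₁ * kd j s)
      rw [pd_sub hS hT k']
      congr 1
      · rw [pd_sum Finset.univ (fun m => fun v => η j m * pd2 m s (H r) v)
          (fun m _ => (hdm m s).const_mul (η j m)) k']
        exact Finset.sum_congr rfl fun m _ => pd_const_mul (hdm m s) (η j m) k'
      · rw [pd_const_mul (diff_coord r u) (K₁ * kd j s) k', pd_coord r k' u]
    have hdiff0 : ∀ s, pd k (b₁ j r s) u - pd s (b₁ j r k) u
        = -K₁ * (kd j s * kd r k - kd j k * kd r s) := by
      intro s
      rw [hpd s k, hpd k s]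
      have hc : ∑ m, η j m * pd k (pd2 m s (H r)) u
          = ∑ m, η j m * pd s (pd2 m k (H r)) u :=
        Finset.sum_congr rfl fun m _ => by rw [pd2_pd_symm hUo (hHsm r) hu m s k]
      rw [hc]; ring
    have hterm : ∀ s, η i s * (pd k (b₁ j r s) u - pd s (b₁ j r k) u)
        = (η i s * (-K₁ * kd r k)) * kd j s + (η i s * (K₁ * kd j k)) * kd r s := by
      intro s; rw [hdiff0 s]; ring
    rw [Finset.sum_congr rfl fun s _ => hterm s, Finset.sum_add_distrib,
      sum_mul_kd (fun s => η i s * (-K₁ * kd r k)) j,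
      sum_mul_kd (fun s => η i s * (K₁ * kd j k)) r]
    ring

end StmtAux

open Matrix in
theorem _root_.StmtAuxMatrixOpen : True := trivial

namespace StmtAux

open Matrix

variable {N : ℕ}

lemma kd_mul_sum (c : Fin N → ℝ) (j : Fin N) : ∑ s, kd j s * c s = c j := by
  simp [kd, Finset.sum_ite_eq]

lemma eta_cancel {η : Matrix (Fin N) (Fin N) ℝ} (hηi : IsUnit η.det)
    (v : Fin N → ℝ) (h : ∀ i, ∑ s, η i s * v s = 0) : ∀ s, v s = 0 := by
  have hv : η.mulVec v = 0 := by
    funext i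
    simpa [Matrix.mulVec, dotProduct] using h i
  have h2 : v = η⁻¹.mulVec (η.mulVec v) := by
    rw [Matrix.mulVec_mulVec, Matrix.nonsing_inv_mul η hηi, Matrix.one_mulVec]
  intro s
  rw [h2, hv]
  simp

lemma smooth_coord {U : Set (Fin N → ℝ)} (j : Fin N) :
    ContDiffOn ℝ (⊤:ℕ∞) (fun u : Fin N → ℝ => u j) U :=
  ((ContinuousLinearMap.proj (R := ℝ) (φ := fun _ : Fin N => ℝ) j).contDiff).contDiffOn

lemma pd_sum_const_mul {ι : Type*} (s : Finset ι) (c : ι → ℝ) (F : ι → (Fin N → ℝ) → ℝ)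
    {u : Fin N → ℝ} (hF : ∀ i ∈ s, DifferentiableAt ℝ (F i) u) (k : Fin N) :
    pd k (fun v => ∑ i ∈ s, c i * F i v) u = ∑ i ∈ s, c i * pd k (F i) u := by
  rw [pd_sum s (fun i v => c i * F i v) (fun i hi => (hF i hi).const_mul (c i)) k]
  exact Finset.sum_congr rfl fun i hi => pd_const_mul (hF i hi) (c i) k

lemma construct_H {U : Set (Fin N → ℝ)} (hUo : IsOpen U) (hUc : Convex ℝ U)
    (η : Matrix (Fin N) (Fin N) ℝ) (hηs : η.IsSymm) (hηi : IsUnit η.det)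
    (K₁ : ℝ)
    (g₁ : Fin N → Fin N → (Fin N → ℝ) → ℝ)
    (b₁ : Fin N → Fin N → Fin N → (Fin N → ℝ) → ℝ)
    (hg₁ : ∀ i j, ContDiffOn ℝ (⊤ : ℕ∞) (g₁ i j) U)
    (hb₁ : ∀ i j k, ContDiffOn ℝ (⊤ : ℕ∞) (b₁ i j k) U)
    (hrel : ∀ u ∈ U, RelS g₁ b₁ K₁ u)
    (hA : ∀ u ∈ U, condA η b₁ u) (hB : ∀ u ∈ U, condB η b₁ K₁ u) :
    ∃ H : Fin N → (Fin N → ℝ) → ℝ,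
      (∀ i, ContDiffOn ℝ (⊤ : ℕ∞) (H i) U) ∧
      (∀ i j, ∀ u ∈ U, g₁ i j u
        = (∑ s, η i s * pd s (H j) u) + (∑ s, η j s * pd s (H i) u) - K₁ * u i * u j) ∧
      (∀ i j k, ∀ u ∈ U, b₁ i j k u
        = (∑ s, η i s * pd2 s k (H j) u) - K₁ * kd i k * u j) := by
  classical
  rcases Set.eq_empty_or_nonempty U with hUe | ⟨x₀, hx₀⟩
  · subst hUe
    exact ⟨fun _ _ => 0, fun _ x hx => absurd hx (Set.notMem_empty x),
      fun i j u hu => (Set.notMem_empty u hu).elim,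
      fun i j k u hu => (Set.notMem_empty u hu).elim⟩
  set η' : Matrix (Fin N) (Fin N) ℝ := η⁻¹ with hη'
  have hη's : η'.IsSymm := by
    rw [hη', Matrix.IsSymm, Matrix.transpose_nonsing_inv, hηs.eq]
  have hunit1 : ∀ i m, ∑ s, η i s * η' s m = kd i m := by
    intro i m
    have h0 := congrFun (congrFun (Matrix.mul_nonsing_inv η hηi) i) m
    rw [Matrix.mul_apply] at h0
    rw [hη', h0, Matrix.one_apply, kd]
  -- pointwise consequence of condition (B)
  have hBpt : ∀ u ∈ U, ∀ j r s k, pd k (b₁ j r s) u - pd s (b₁ j r k) u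
      = K₁ * (kd s r * kd j k - kd s j * kd r k) := by
    intro u hu j r s k
    have h0 : ∀ i, ∑ s', η i s' * ((pd k (b₁ j r s') u - pd s' (b₁ j r k) u)
        - K₁ * (kd s' r * kd j k - kd s' j * kd r k)) = 0 := by
      intro i
      have h1 := hB u hu i j r k
      have h2 : ∑ s', η i s' * (K₁ * (kd s' r * kd j k - kd s' j * kd r k))
          = K₁ * (η i r * kd j k - η i j * kd r k) := by
        have e : ∀ s', η i s' * (K₁ * (kd s' r * kd j k - kd s' j * kd r k))
            = (η i s' * (K₁ * kd j k)) * kd s' r - (η i s' * (K₁ * kd r k)) * kd s' j :=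
          fun s' => by ring
        rw [Finset.sum_congr rfl fun s' _ => e s', Finset.sum_sub_distrib,
          sum_mul_kd' (fun s' => η i s' * (K₁ * kd j k)) r,
          sum_mul_kd' (fun s' => η i s' * (K₁ * kd r k)) j]
        ring
      have e2 : ∀ s', η i s' * ((pd k (b₁ j r s') u - pd s' (b₁ j r k) u)
            - K₁ * (kd s' r * kd j k - kd s' j * kd r k))
          = η i s' * (pd k (b₁ j r s') u - pd s' (b₁ j r k) u)
            - η i s' * (K₁ * (kd s' r * kd j k - kd s' j * kd r k)) := fun s' => by ring
      rw [Finset.sum_congr rfl fun s' _ => e2 s', Finset.sum_sub_distrib, h1, h2]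
      ring
    have := eta_cancel hηi _ h0 s
    linarith [this]
  -- symmetry of the Hessian candidate, from condition (A)
  have hQsym : ∀ u ∈ U, ∀ j s k, ∑ i', η' s i' * b₁ i' j k u
      = ∑ i', η' k i' * b₁ i' j s u := by
    intro u hu j s k
    set M : Matrix (Fin N) (Fin N) ℝ := Matrix.of (fun i' k' => b₁ i' j k' u) with hM
    have hsymM : M * η = η * Mᵀ := by
      ext a c
      rw [Matrix.mul_apply, Matrix.mul_apply]
      calc ∑ s', M a s' * η s' c
          = ∑ s', η c s' * b₁ a j s' u := by
            refine Finset.sum_congr rfl fun s' _ => ?_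
            rw [hηs.apply c s']
            simp only [hM, Matrix.of_apply]
            ring
        _ = ∑ s', η a s' * b₁ c j s' u := hA u hu c a j
        _ = ∑ s', η a s' * Mᵀ s' c := by
            refine Finset.sum_congr rfl fun s' _ => ?_
            simp only [hM, Matrix.transpose_apply, Matrix.of_apply]
    have h1 : M = η * Mᵀ * η' := by
      rw [← hsymM, Matrix.mul_assoc, hη', Matrix.mul_nonsing_inv η hηi, Matrix.mul_one]
    have h2 : η' * M = Mᵀ * η' := by
      conv_lhs => rw [h1]
      rw [← Matrix.mul_assoc, ← Matrix.mul_assoc, hη', Matrix.nonsing_inv_mul η hηi,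
        Matrix.one_mul]
    have h3 := congrFun (congrFun h2 s) k
    rw [Matrix.mul_apply, Matrix.mul_apply] at h3
    calc ∑ i', η' s i' * b₁ i' j k u
        = ∑ i', η' s i' * M i' k := by
          refine Finset.sum_congr rfl fun i' _ => ?_
          simp only [hM, Matrix.of_apply]
      _ = ∑ i', Mᵀ s i' * η' i' k := h3
      _ = ∑ i', η' k i' * b₁ i' j s u := by
          refine Finset.sum_congr rfl fun i' _ => ?_
          rw [hη's.apply k i']
          simp only [hM, Matrix.transpose_apply, Matrix.of_apply]
          ring
  -- the Hessian candidate
  set A : Fin N → Fin N → Fin N → (Fin N → ℝ) → ℝ :=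
    fun j s k u => (∑ i', η' s i' * b₁ i' j k u) + K₁ * η' s k * u j with hAdef
  have hAapp : ∀ j s k u, A j s k u
      = (∑ i', η' s i' * b₁ i' j k u) + K₁ * η' s k * u j := fun _ _ _ _ => rfl
  have hAsm : ∀ j s k, ContDiffOn ℝ (⊤:ℕ∞) (A j s k) U := by
    intro j s k
    apply ContDiffOn.add
    · exact ContDiffOn.sum fun i' _ => contDiffOn_const.mul (hb₁ i' j k)
    · exact contDiffOn_const.mul (smooth_coord j)
  have hbdiff : ∀ i' j k, ∀ u ∈ U, DifferentiableAt ℝ (b₁ i' j k) u :=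
    fun i' j k u hu => smooth_diffAt hUo (hb₁ i' j k) hu
  have hApd : ∀ j s k p, ∀ u ∈ U, pd p (A j s k) u
      = (∑ i', η' s i' * pd p (b₁ i' j k) u) + K₁ * η' s k * kd j p := by
    intro j s k p u hu
    have hfun : A j s k
        = fun v => (fun w => ∑ i', η' s i' * b₁ i' j k w) v
            + (fun w : Fin N → ℝ => (K₁ * η' s k) * w j) v := rfl
    have hS : DifferentiableAt ℝ (fun w => ∑ i', η' s i' * b₁ i' j k w) u :=
      DifferentiableAt.fun_sum fun i' _ => (hbdiff i' j k u hu).const_mul (η' s i')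
    have hT : DifferentiableAt ℝ (fun w : Fin N → ℝ => (K₁ * η' s k) * w j) u :=
      (diff_coord j u).const_mul _
    rw [hfun, pd_add hS hT p,
      pd_sum_const_mul Finset.univ (fun i' => η' s i') (fun i' => b₁ i' j k)
        (fun i' _ => hbdiff i' j k u hu) p,
      pd_const_mul (diff_coord j u) (K₁ * η' s k) p, pd_coord j p u]
  have hAclosed : ∀ j s, ∀ p k, ∀ u ∈ U, pd p (A j s k) u = pd k (A j s p) u := by
    intro j s p k u hu
    rw [hApd j s k p u hu, hApd j s p k u hu]
    have e : ∀ i', η' s i' * pd p (b₁ i' j k) u - η' s i' * pd k (b₁ i' j p) u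
        = (η' s i' * (K₁ * kd k j)) * kd i' p - (η' s i' * (K₁ * kd j p)) * kd k i' := by
      intro i'
      have h := hBpt u hu i' j k p
      linear_combination (η' s i') * h
    have hsum : ∑ i', η' s i' * pd p (b₁ i' j k) u - ∑ i', η' s i' * pd k (b₁ i' j p) u
        = K₁ * kd k j * η' s p - K₁ * kd j p * η' s k := by
      rw [← Finset.sum_sub_distrib, Finset.sum_congr rfl fun i' _ => e i',
        Finset.sum_sub_distrib, sum_mul_kd' (fun i' => η' s i' * (K₁ * kd k j)) p,
        sum_mul_kd (fun i' => η' s i' * (K₁ * kd j p)) k]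
      ring
    have hkd : kd k j = kd j k := kd_symm k j
    linear_combination hsum + (K₁ * η' s p) * hkd
  -- first integration: the gradient fields
  have hGex : ∀ j s, ∃ G, ContDiffOn ℝ (⊤:ℕ∞) G U ∧ ∀ k, ∀ u ∈ U, pd k G u = A j s k u :=
    fun j s => poincare hUo hUc hx₀ (fun k => A j s k) (fun k => hAsm j s k)
      (fun p k u hu => hAclosed j s p k u hu)
  choose G hGsm hGpd using hGex
  -- value of ∑_s η i s * A j s k
  have hsumA : ∀ i j k, ∀ u ∈ U, ∑ s, η i s * A j s k u
      = b₁ i j k u + K₁ * kd i k * u j := by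
    intro i j k u hu
    have e : ∀ s, η i s * A j s k u
        = (∑ i', η i s * (η' s i' * b₁ i' j k u)) + (η i s * η' s k) * (K₁ * u j) := by
      intro s
      rw [hAapp, mul_add, Finset.mul_sum]
      ring
    rw [Finset.sum_congr rfl fun s _ => e s, Finset.sum_add_distrib]
    have h1 : ∑ s, ∑ i', η i s * (η' s i' * b₁ i' j k u) = b₁ i j k u := by
      rw [Finset.sum_comm]
      have e2 : ∀ i', ∑ s, η i s * (η' s i' * b₁ i' j k u)
          = (∑ s, η i s * η' s i') * b₁ i' j k u := by
        intro i'; rw [Finset.sum_mul]; exact Finset.sum_congr rfl fun s _ => by ring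
      rw [Finset.sum_congr rfl fun i' _ => e2 i']
      rw [Finset.sum_congr rfl fun i' _ => by rw [hunit1 i i'] ]
      exact kd_mul_sum (fun i' => b₁ i' j k u) i
    have h2 : ∑ s, (η i s * η' s k) * (K₁ * u j) = kd i k * (K₁ * u j) := by
      rw [← Finset.sum_mul, hunit1 i k]
    rw [h1, h2]
    ring
  -- the difference of g₁ with the candidate metric is constant
  set gt : Fin N → Fin N → (Fin N → ℝ) → ℝ := fun i j u =>
    (∑ s, η i s * G j s u) + (∑ s, η j s * G i s u) - K₁ * u i * u j with hgt
  have hgtapp : ∀ i j u, gt i j u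
      = (∑ s, η i s * G j s u) + (∑ s, η j s * G i s u) - K₁ * u i * u j :=
    fun _ _ _ => rfl
  have hgtsym : ∀ i j u, gt i j u = gt j i u := by
    intro i j u; rw [hgtapp, hgtapp]; ring
  have hgtdiff : ∀ i j, ∀ u ∈ U, DifferentiableAt ℝ (gt i j) u := by
    intro i j u hu
    have hS1 : DifferentiableAt ℝ (fun v => ∑ s, η i s * G j s v) u :=
      DifferentiableAt.fun_sum fun s _ => (smooth_diffAt hUo (hGsm j s) hu).const_mul _
    have hS2 : DifferentiableAt ℝ (fun v => ∑ s, η j s * G i s v) u :=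
      DifferentiableAt.fun_sum fun s _ => (smooth_diffAt hUo (hGsm i s) hu).const_mul _
    have hT : DifferentiableAt ℝ (fun v : Fin N → ℝ => K₁ * v i * v j) u :=
      (((diff_coord i u).const_mul K₁).mul (diff_coord j u))
    exact (hS1.add hS2).sub hT
  have hpdgt : ∀ i j k, ∀ u ∈ U, pd k (gt i j) u = b₁ i j k u + b₁ j i k u := by
    intro i j k u hu
    have hS1 : DifferentiableAt ℝ (fun v => ∑ s, η i s * G j s v) u :=
      DifferentiableAt.fun_sum fun s _ => (smooth_diffAt hUo (hGsm j s) hu).const_mul _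
    have hS2 : DifferentiableAt ℝ (fun v => ∑ s, η j s * G i s v) u :=
      DifferentiableAt.fun_sum fun s _ => (smooth_diffAt hUo (hGsm i s) hu).const_mul _
    have hT : DifferentiableAt ℝ (fun v : Fin N → ℝ => K₁ * v i * v j) u :=
      (((diff_coord i u).const_mul K₁).mul (diff_coord j u))
    have hfun : gt i j = fun v =>
        ((fun w => ∑ s, η i s * G j s w) v + (fun w => ∑ s, η j s * G i s w) v)
          - (fun w : Fin N → ℝ => K₁ * w i * w j) v := rfl
    rw [hfun, pd_sub (hS1.fun_add hS2) hT k, pd_add hS1 hS2 k,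
      pd_sum_const_mul Finset.univ (fun s => η i s) (fun s => G j s)
        (fun s _ => smooth_diffAt hUo (hGsm j s) hu) k,
      pd_sum_const_mul Finset.univ (fun s => η j s) (fun s => G i s)
        (fun s _ => smooth_diffAt hUo (hGsm i s) hu) k,
      pd_coord_mul_coord K₁ i j k u]
    have e1 : ∑ s, η i s * pd k (G j s) u = b₁ i j k u + K₁ * kd i k * u j := by
      rw [Finset.sum_congr rfl fun s _ => by rw [hGpd j s k u hu] ]
      exact hsumA i j k u hu
    have e2 : ∑ s, η j s * pd k (G i s) u = b₁ j i k u + K₁ * kd j k * u i := by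
      rw [Finset.sum_congr rfl fun s _ => by rw [hGpd i s k u hu] ]
      exact hsumA j i k u hu
    rw [e1, e2]
    ring
  have hDconst : ∀ i j, ∀ u ∈ U, g₁ i j u - gt i j u = g₁ i j x₀ - gt i j x₀ := by
    intro i j u hu
    have hDdiff : DifferentiableOn ℝ (fun v => g₁ i j v - gt i j v) U := fun v hv =>
      ((smooth_diffAt hUo (hg₁ i j) hv).sub (hgtdiff i j v hv)).differentiableWithinAt
    have hzero : ∀ v ∈ U, fderiv ℝ (fun w => g₁ i j w - gt i j w) v = 0 := by
      intro v hv
      apply clm_ext_basis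
      intro k
      have hpd0 : pd k (fun w => g₁ i j w - gt i j w) v = 0 := by
        rw [pd_sub (smooth_diffAt hUo (hg₁ i j) hv) (hgtdiff i j v hv) k,
          hpdgt i j k v hv, (hrel v hv).2.1 i j k]
        ring
      rw [show (fderiv ℝ (fun w => g₁ i j w - gt i j w) v) (Pi.single k 1)
        = pd k (fun w => g₁ i j w - gt i j w) v from rfl, hpd0]
      simp
    have := hUc.norm_image_sub_le_of_norm_fderivWithin_le hDdiff
      (C := 0) (fun v hv => by
        rw [fderivWithin_of_isOpen hUo hv, hzero v hv]; simp) hx₀ hu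
    simp only [zero_mul] at this
    have h0 : g₁ i j u - gt i j u - (g₁ i j x₀ - gt i j x₀) = 0 := by
      have := norm_le_zero_iff.mp this
      linarith [sub_eq_zero.mp this]
    linarith
  set c : Fin N → Fin N → ℝ := fun m j => g₁ m j x₀ - gt m j x₀ with hc
  have hcsym : ∀ m j, c m j = c j m := by
    intro m j
    show g₁ m j x₀ - gt m j x₀ = g₁ j m x₀ - gt j m x₀
    rw [(hrel x₀ hx₀).1 m j, hgtsym m j x₀]
  set l : Fin N → Fin N → ℝ := fun j s => (1/2) * ∑ m, η' s m * c m j with hl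
  set G' : Fin N → Fin N → (Fin N → ℝ) → ℝ := fun j s u => G j s u + l j s with hG'
  have hG'sm : ∀ j s, ContDiffOn ℝ (⊤:ℕ∞) (G' j s) U :=
    fun j s => (hGsm j s).add contDiffOn_const
  have hG'pd : ∀ j s k, ∀ u ∈ U, pd k (G' j s) u = A j s k u := by
    intro j s k u hu
    have hfun : G' j s = fun u => G j s u + l j s := rfl
    rw [hfun, pd_add_const (l j s) u k]
    exact hGpd j s k u hu
  have hG'sym : ∀ j, ∀ s k, ∀ u ∈ U, pd s (G' j k) u = pd k (G' j s) u := by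
    intro j s k u hu
    rw [hG'pd j k s u hu, hG'pd j s k u hu, hAapp, hAapp,
      hQsym u hu j k s, hη's.apply s k]
  have hHex : ∀ j, ∃ Hj, ContDiffOn ℝ (⊤:ℕ∞) Hj U ∧
      ∀ s, ∀ u ∈ U, pd s Hj u = G' j s u :=
    fun j => poincare hUo hUc hx₀ (fun s => G' j s) (fun s => hG'sm j s)
      (fun s k u hu => hG'sym j s k u hu)
  choose H hHsm hHpd using hHex
  refine ⟨H, hHsm, ?_, ?_⟩
  · -- the metric formula
    intro i j u hu
    have h1 : ∀ i' j', ∑ s, η i' s * pd s (H j') u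
        = (∑ s, η i' s * G j' s u) + (1/2) * c i' j' := by
      intro i' j'
      have e : ∀ s, η i' s * pd s (H j') u = η i' s * G j' s u + η i' s * l j' s := by
        intro s
        rw [hHpd j' s u hu]
        show η i' s * (G j' s u + l j' s) = _
        ring
      rw [Finset.sum_congr rfl fun s _ => e s, Finset.sum_add_distrib]
      congr 1
      have e2 : ∀ s, η i' s * l j' s = (1/2) * ∑ m, η i' s * (η' s m * c m j') := by
        intro s
        show η i' s * ((1/2) * ∑ m, η' s m * c m j') = _
        rw [Finset.mul_sum, Finset.mul_sum, Finset.mul_sum]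
        rw [Finset.sum_congr rfl fun m _ =>
          show η i' s * ((1/2) * (η' s m * c m j')) = (1/2) * (η i' s * (η' s m * c m j'))
          from by ring]
      rw [Finset.sum_congr rfl fun s _ => e2 s, ← Finset.mul_sum, Finset.sum_comm]
      have e3 : ∀ m, ∑ s, η i' s * (η' s m * c m j') = kd i' m * c m j' := by
        intro m
        rw [Finset.sum_congr rfl fun s _ =>
          show η i' s * (η' s m * c m j') = (η i' s * η' s m) * c m j' from by ring,
          ← Finset.sum_mul, hunit1 i' m]
      rw [Finset.sum_congr rfl fun m _ => e3 m, kd_mul_sum (fun m => c m j') i']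
    rw [h1 i j, h1 j i]
    have hd : g₁ i j u - gt i j u = c i j := hDconst i j u hu
    have hgtu := hgtapp i j u
    have hcs := hcsym i j
    linear_combination hd + hgtu + (1/2) * hcs
  · -- the b formula
    intro i j k u hu
    have h2 : ∀ s, pd2 s k (H j) u = A j s k u := by
      intro s
      have hcg : pd k (pd s (H j)) u = pd k (G' j s) u :=
        pd_congrOn hUo (fun v hv => hHpd j s v hv) hu k
      rw [pd2, hcg]
      exact hG'pd j s k u hu
    have h3 : ∑ s, η i s * pd2 s k (H j) u = ∑ s, η i s * A j s k u :=
      Finset.sum_congr rfl fun s _ => by rw [h2 s]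
    rw [h3, hsumA i j k u hu]
    ring

end StmtAux


/-- Theorem 1: on a convex open set `U`, a (possibly degenerate) nonlocal bracket
given by `(g₁, b₁)` with nonlocal constant `K₁` is compatible with the constant
bracket given by a symmetric invertible constant matrix `η` (i.e. the pair
`(g₁ + λη, b₁)` satisfies (s1)–(s5) with `K = K₁` for every `λ`) iff there exist
smooth functions `H^i` with `g₁^{ij} = η^{is}∂H^j/∂u^s + η^{js}∂H^i/∂u^s − K₁u^iu^j`
and `b₁^{ij}_k = η^{is}∂²H^j/∂u^s∂u^k − K₁δ^i_k u^j` on `U`. -/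
theorem stmt_3 {N : ℕ} (U : Set (Fin N → ℝ)) (hUo : IsOpen U) (hUc : Convex ℝ U)
    (η : Matrix (Fin N) (Fin N) ℝ) (hηs : η.IsSymm) (hηi : IsUnit η.det)
    (K₁ : ℝ)
    (g₁ : Fin N → Fin N → (Fin N → ℝ) → ℝ)
    (b₁ : Fin N → Fin N → Fin N → (Fin N → ℝ) → ℝ)
    (hg₁ : ∀ i j, ContDiffOn ℝ (⊤ : ℕ∞) (g₁ i j) U)
    (hb₁ : ∀ i j k, ContDiffOn ℝ (⊤ : ℕ∞) (b₁ i j k) U)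
    (hrel : ∀ u ∈ U, RelS g₁ b₁ K₁ u) :
    (∀ lam : ℝ, ∀ u ∈ U, RelS (fun i j v => g₁ i j v + lam * η i j) b₁ K₁ u) ↔
    (∃ H : Fin N → (Fin N → ℝ) → ℝ,
      (∀ i, ContDiffOn ℝ (⊤ : ℕ∞) (H i) U) ∧
      (∀ i j, ∀ u ∈ U, g₁ i j u
        = (∑ s, η i s * pd s (H j) u) + (∑ s, η j s * pd s (H i) u) - K₁ * u i * u j) ∧
      (∀ i j k, ∀ u ∈ U, b₁ i j k u
        = (∑ s, η i s * pd2 s k (H j) u) - K₁ * kd i k * u j)) := by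
  constructor
  · intro hlam
    have hAB : ∀ u ∈ U, StmtAux.condA η b₁ u ∧ StmtAux.condB η b₁ K₁ u :=
      fun u hu => StmtAux.conds_of_relS_one (hrel u hu) (hlam 1 u hu)
    exact StmtAux.construct_H hUo hUc η hηs hηi K₁ g₁ b₁ hg₁ hb₁ hrel
      (fun u hu => (hAB u hu).1) (fun u hu => (hAB u hu).2)
  · rintro ⟨H, hHsm, hg, hb⟩ lam u hu
    have hc := StmtAux.conds_of_H hUo η hηs K₁ b₁ H hHsm hb hu
    exact StmtAux.relS_shift hηs (hrel u hu) hc.1 hc.2 lam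
end

section
/- Let η^{ij} be a constant symmetric invertible real N×N matrix, K₁ ∈ ℝ, and let c^i_{jkl} be real constants that are fully symmetric in the lower indices j,k,l. Define H^i(u) = Σ_{j,k,l} c^i_{jkl} u^j u^k u^l on ℝ^N. Then the functions H^i satisfy systems (ass1) and (ass2) at every u ∈ ℝ^N if and only if the structural constants a^{ij}_{kl} := Σ_s η^{is} c^j_{skl} satisfy, for all indices: Σ_s (a^{ki}_{ms} a^{sj}_{nl} − a^{kj}_{ns} a^{si}_{ml} + a^{ki}_{ns} a^{sj}_{ml} − a^{kj}_{ms} a^{si}_{nl}) = 0, and Σ_{[l,m,n]} Σ_s [ (3 a^{is}_{mn} + 3 a^{si}_{mn} − K₁ δ^i_m δ^s_n) a^{jk}_{ls} − (3 a^{js}_{mn} + 3 a^{sj}_{mn} − K₁ δ^j_m δ^s_n) a^{ik}_{ls} ] = 0, where Σ_{[l,m,n]} denotes summation over all six permutations of the indices l, m, n. -/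
/-- The summand (over `s`) in the second relation for cubic solutions, with free
indices `i j k` (upper) and `l m n` (to be permuted). -/
def cubicTerm {N : ℕ} (a : Fin N → Fin N → Fin N → Fin N → ℝ) (K₁ : ℝ)
    (i j k l m n : Fin N) : ℝ :=
  ∑ s, ((3 * a i s m n + 3 * a s i m n - K₁ * kd i m * kd s n) * a j k l s
      - (3 * a j s m n + 3 * a s j m n - K₁ * kd j m * kd s n) * a i k l s)

variable {N : ℕ}

noncomputable def prj (j : Fin N) : (Fin N → ℝ) →L[ℝ] ℝ :=
  ContinuousLinearMap.proj j

lemma hasFDerivAt_coord (j : Fin N) (u : Fin N → ℝ) :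
    HasFDerivAt (fun v : Fin N → ℝ => v j) (prj j) u :=
  (prj j).hasFDerivAt

@[simp] lemma prj_apply (j : Fin N) (v : Fin N → ℝ) : prj j v = v j := rfl

lemma pd_quad (b : Fin N → Fin N → ℝ) (s : Fin N) (u : Fin N → ℝ) :
    pd s (fun v => ∑ m, ∑ n, b m n * v m * v n) u
      = (∑ n, b s n * u n) + ∑ m, b m s * u m := by
  have hfun : (fun v : Fin N → ℝ => ∑ m, ∑ n, b m n * v m * v n)
      = fun v => ∑ m, ∑ n, b m n * (v m * v n) := by
    funext v; simp [mul_assoc]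
  have key : HasFDerivAt (fun v : Fin N → ℝ => ∑ m, ∑ n, b m n * (v m * v n))
      (∑ m, ∑ n, b m n • (u m • prj n + u n • prj m)) u :=
    HasFDerivAt.fun_sum fun m _ => HasFDerivAt.fun_sum fun n _ =>
      (((hasFDerivAt_coord m u).mul (hasFDerivAt_coord n u)).const_mul (b m n))
  simp only [pd, hfun, key.fderiv]
  simp [Pi.single_apply, mul_add, Finset.sum_add_distrib, mul_ite, mul_one, mul_zero,
    Finset.sum_ite_eq, Finset.sum_ite_eq']
  ring

lemma pd_cubic (c : Fin N → Fin N → Fin N → ℝ) (s : Fin N) (u : Fin N → ℝ) :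
    pd s (fun v => ∑ j, ∑ k, ∑ l, c j k l * v j * v k * v l) u
      = (∑ k, ∑ l, c s k l * u k * u l) + (∑ j, ∑ l, c j s l * u j * u l)
        + (∑ j, ∑ k, c j k s * u j * u k) := by
  have hfun : (fun v : Fin N → ℝ => ∑ j, ∑ k, ∑ l, c j k l * v j * v k * v l)
      = fun v => ∑ j, ∑ k, ∑ l, c j k l * (v j * v k * v l) := by
    funext v; simp [mul_assoc]
  have key : HasFDerivAt (fun v : Fin N → ℝ => ∑ j, ∑ k, ∑ l, c j k l * (v j * v k * v l))
      (∑ j, ∑ k, ∑ l, c j k l • ((u j * u k) • prj l + u l • (u j • prj k + u k • prj j))) u :=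
    HasFDerivAt.fun_sum fun j _ => HasFDerivAt.fun_sum fun k _ => HasFDerivAt.fun_sum fun l _ =>
      ((((hasFDerivAt_coord j u).mul (hasFDerivAt_coord k u)).mul
        (hasFDerivAt_coord l u)).const_mul (c j k l))
  simp only [pd, hfun, key.fderiv]
  simp [Pi.single_apply, mul_add, Finset.sum_add_distrib, mul_ite, mul_one, mul_zero,
    Finset.sum_ite_eq, Finset.sum_ite_eq']
  have h1 : ∑ x : Fin N, ∑ y : Fin N, c x y s * (u x * u y)
      = ∑ j, ∑ k, c j k s * u j * u k :=
    Finset.sum_congr rfl fun _ _ => Finset.sum_congr rfl fun _ _ => by ring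
  have h2 : ∑ x : Fin N, ∑ y : Fin N, c x s y * (u y * u x)
      = ∑ j, ∑ l, c j s l * u j * u l :=
    Finset.sum_congr rfl fun _ _ => Finset.sum_congr rfl fun _ _ => by ring
  have h3 : ∑ x : Fin N, ∑ y : Fin N, c s x y * (u y * u x)
      = ∑ k, ∑ l, c s k l * u k * u l :=
    Finset.sum_congr rfl fun _ _ => Finset.sum_congr rfl fun _ _ => by ring
  rw [h1, h2, h3]; ring

variable {c : Fin N → Fin N → Fin N → Fin N → ℝ} {H : Fin N → (Fin N → ℝ) → ℝ}

lemma pd_H (hc1 : ∀ i j k l, c i j k l = c i k j l)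
    (hc2 : ∀ i j k l, c i j k l = c i j l k)
    (hH : ∀ i u, H i u = ∑ j, ∑ k, ∑ l, c i j k l * u j * u k * u l)
    (i k : Fin N) (u : Fin N → ℝ) :
    pd k (H i) u = ∑ m, ∑ n, (3 * c i k m n) * u m * u n := by
  have hfun : H i = fun v => ∑ j, ∑ k, ∑ l, c i j k l * v j * v k * v l := funext (hH i)
  rw [hfun, pd_cubic]
  have h2 : ∑ j, ∑ l, c i j k l * u j * u l = ∑ m, ∑ n, c i k m n * u m * u n :=
    Finset.sum_congr rfl fun m _ => Finset.sum_congr rfl fun n _ => by rw [hc1]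
  have h3 : ∑ j, ∑ k', c i j k' k * u j * u k' = ∑ m, ∑ n, c i k m n * u m * u n :=
    Finset.sum_congr rfl fun m _ => Finset.sum_congr rfl fun n _ => by
      rw [hc2, hc1]
  rw [h2, h3, ← Finset.sum_add_distrib, ← Finset.sum_add_distrib]
  exact Finset.sum_congr rfl fun m _ => by
    rw [← Finset.sum_add_distrib, ← Finset.sum_add_distrib]
    exact Finset.sum_congr rfl fun n _ => by ring

lemma pd2_H (hc1 : ∀ i j k l, c i j k l = c i k j l)
    (hc2 : ∀ i j k l, c i j k l = c i j l k)
    (hH : ∀ i u, H i u = ∑ j, ∑ k, ∑ l, c i j k l * u j * u k * u l)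
    (k s i : Fin N) (u : Fin N → ℝ) :
    pd2 k s (H i) u = ∑ m, (6 * c i k s m) * u m := by
  have hfun : pd k (H i) = fun v => ∑ m, ∑ n, (3 * c i k m n) * v m * v n :=
    funext fun v => pd_H hc1 hc2 hH i k v
  rw [pd2, hfun, pd_quad, ← Finset.sum_add_distrib]
  exact Finset.sum_congr rfl fun m _ => by rw [hc2 i k m s]; ring

lemma sc_outer (f : Fin N → Fin N → Fin N → ℝ) :
    ∑ x, ∑ y, ∑ z, f x y z = ∑ y, ∑ x, ∑ z, f x y z := Finset.sum_comm

lemma sc_inner (f : Fin N → Fin N → Fin N → ℝ) :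
    ∑ x, ∑ y, ∑ z, f x y z = ∑ x, ∑ z, ∑ y, f x y z :=
  Finset.sum_congr rfl fun _ _ => Finset.sum_comm

lemma sum_comm4a (f : Fin N → Fin N → Fin N → Fin N → ℝ) :
    ∑ s, ∑ p, ∑ m, ∑ n, f s p m n = ∑ m, ∑ n, ∑ s, ∑ p, f s p m n :=
  calc ∑ s, ∑ p, ∑ m, ∑ n, f s p m n
      = ∑ s, ∑ m, ∑ p, ∑ n, f s p m n :=
        Finset.sum_congr rfl fun s _ => Finset.sum_comm
    _ = ∑ m, ∑ s, ∑ p, ∑ n, f s p m n := Finset.sum_comm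
    _ = ∑ m, ∑ s, ∑ n, ∑ p, f s p m n :=
        Finset.sum_congr rfl fun m _ => Finset.sum_congr rfl fun s _ => Finset.sum_comm
    _ = ∑ m, ∑ n, ∑ s, ∑ p, f s p m n :=
        Finset.sum_congr rfl fun m _ => Finset.sum_comm

lemma sum_comm4b (f : Fin N → Fin N → Fin N → Fin N → ℝ) :
    ∑ s, ∑ m, ∑ n, ∑ l, f s m n l = ∑ l, ∑ m, ∑ n, ∑ s, f s m n l :=
  calc ∑ s, ∑ m, ∑ n, ∑ l, f s m n l
      = ∑ s, ∑ m, ∑ l, ∑ n, f s m n l :=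
        Finset.sum_congr rfl fun s _ => Finset.sum_congr rfl fun m _ => Finset.sum_comm
    _ = ∑ s, ∑ l, ∑ m, ∑ n, f s m n l :=
        Finset.sum_congr rfl fun s _ => Finset.sum_comm
    _ = ∑ l, ∑ s, ∑ m, ∑ n, f s m n l := Finset.sum_comm
    _ = ∑ l, ∑ m, ∑ s, ∑ n, f s m n l :=
        Finset.sum_congr rfl fun l _ => Finset.sum_comm
    _ = ∑ l, ∑ m, ∑ n, ∑ s, f s m n l :=
        Finset.sum_congr rfl fun l _ => Finset.sum_congr rfl fun m _ => Finset.sum_comm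

lemma quad_ext {B : Fin N → Fin N → ℝ}
    (h : ∀ u : Fin N → ℝ, ∑ m, ∑ n, B m n * u m * u n = 0) (m n : Fin N) :
    B m n + B n m = 0 := by
  have h1 := h (fun t => kd t m + kd t n)
  have h2 := h (fun t => kd t m)
  have h3 := h (fun t => kd t n)
  simp only [kd, mul_add, add_mul, mul_ite, ite_mul, mul_one, one_mul, mul_zero, zero_mul,
    Finset.sum_add_distrib, Finset.sum_ite_eq, Finset.sum_ite_eq', Finset.mem_univ,
    if_true] at h1 h2 h3
  linarith

lemma quad_syn {B : Fin N → Fin N → ℝ}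
    (h : ∀ m n, B m n + B n m = 0) (u : Fin N → ℝ) :
    ∑ m, ∑ n, B m n * u m * u n = 0 := by
  have e : ∑ m, ∑ n, B n m * u m * u n = ∑ m, ∑ n, B m n * u m * u n := by
    rw [Finset.sum_comm]
    exact Finset.sum_congr rfl fun _ _ => Finset.sum_congr rfl fun _ _ => by ring
  have tot : ∑ m, ∑ n, (B m n * u m * u n + B n m * u m * u n) = 0 :=
    Finset.sum_eq_zero fun m _ => Finset.sum_eq_zero fun n _ => by
      linear_combination (u m * u n) * h m n
  simp only [Finset.sum_add_distrib] at tot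
  linarith

lemma cubic_ext {T : Fin N → Fin N → Fin N → ℝ}
    (h : ∀ u : Fin N → ℝ, ∑ l, ∑ m, ∑ n, T l m n * u l * u m * u n = 0) (l m n : Fin N) :
    T l m n + T l n m + T m l n + T m n l + T n l m + T n m l = 0 := by
  have h7 := h (fun t => kd t l + kd t m + kd t n)
  have h4 := h (fun t => kd t l + kd t m)
  have h5 := h (fun t => kd t l + kd t n)
  have h6 := h (fun t => kd t m + kd t n)
  have h1 := h (fun t => kd t l)
  have h2 := h (fun t => kd t m)
  have h3 := h (fun t => kd t n)
  simp only [kd, mul_add, add_mul, mul_ite, ite_mul, mul_one, one_mul, mul_zero, zero_mul,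
    Finset.sum_add_distrib, Finset.sum_ite_eq, Finset.sum_ite_eq', Finset.mem_univ,
    if_true] at h1 h2 h3 h4 h5 h6 h7
  linarith

lemma cubic_syn' {T : Fin N → Fin N → Fin N → ℝ}
    (h : ∀ l m n, T l m n + T l n m + T m l n + T m n l + T n l m + T n m l = 0)
    (u : Fin N → ℝ) :
    ∑ l, ∑ m, ∑ n, T l m n * u l * u m * u n = 0 := by
  have e2 : ∑ x, ∑ y, ∑ z, T x z y * u x * u y * u z
      = ∑ x, ∑ y, ∑ z, T x y z * u x * u y * u z :=
    calc ∑ x, ∑ y, ∑ z, T x z y * u x * u y * u z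
        = ∑ x, ∑ z, ∑ y, T x z y * u x * u y * u z := sc_inner _
      _ = ∑ x, ∑ y, ∑ z, T x y z * u x * u y * u z :=
        Finset.sum_congr rfl fun _ _ => Finset.sum_congr rfl fun _ _ =>
          Finset.sum_congr rfl fun _ _ => by ring
  have e3 : ∑ x, ∑ y, ∑ z, T y x z * u x * u y * u z
      = ∑ x, ∑ y, ∑ z, T x y z * u x * u y * u z :=
    calc ∑ x, ∑ y, ∑ z, T y x z * u x * u y * u z
        = ∑ y, ∑ x, ∑ z, T y x z * u x * u y * u z := sc_outer _
      _ = ∑ x, ∑ y, ∑ z, T x y z * u x * u y * u z :=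
        Finset.sum_congr rfl fun _ _ => Finset.sum_congr rfl fun _ _ =>
          Finset.sum_congr rfl fun _ _ => by ring
  have e4 : ∑ x, ∑ y, ∑ z, T y z x * u x * u y * u z
      = ∑ x, ∑ y, ∑ z, T x y z * u x * u y * u z :=
    calc ∑ x, ∑ y, ∑ z, T y z x * u x * u y * u z
        = ∑ y, ∑ x, ∑ z, T y z x * u x * u y * u z := sc_outer _
      _ = ∑ y, ∑ z, ∑ x, T y z x * u x * u y * u z := sc_inner _
      _ = ∑ x, ∑ y, ∑ z, T x y z * u x * u y * u z :=
        Finset.sum_congr rfl fun _ _ => Finset.sum_congr rfl fun _ _ =>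
          Finset.sum_congr rfl fun _ _ => by ring
  have e5 : ∑ x, ∑ y, ∑ z, T z x y * u x * u y * u z
      = ∑ x, ∑ y, ∑ z, T x y z * u x * u y * u z :=
    calc ∑ x, ∑ y, ∑ z, T z x y * u x * u y * u z
        = ∑ x, ∑ z, ∑ y, T z x y * u x * u y * u z := sc_inner _
      _ = ∑ z, ∑ x, ∑ y, T z x y * u x * u y * u z := sc_outer _
      _ = ∑ x, ∑ y, ∑ z, T x y z * u x * u y * u z :=
        Finset.sum_congr rfl fun _ _ => Finset.sum_congr rfl fun _ _ =>
          Finset.sum_congr rfl fun _ _ => by ring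
  have e6 : ∑ x, ∑ y, ∑ z, T z y x * u x * u y * u z
      = ∑ x, ∑ y, ∑ z, T x y z * u x * u y * u z :=
    calc ∑ x, ∑ y, ∑ z, T z y x * u x * u y * u z
        = ∑ x, ∑ z, ∑ y, T z y x * u x * u y * u z := sc_inner _
      _ = ∑ z, ∑ x, ∑ y, T z y x * u x * u y * u z := sc_outer _
      _ = ∑ z, ∑ y, ∑ x, T z y x * u x * u y * u z := sc_inner _
      _ = ∑ x, ∑ y, ∑ z, T x y z * u x * u y * u z :=
        Finset.sum_congr rfl fun _ _ => Finset.sum_congr rfl fun _ _ =>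
          Finset.sum_congr rfl fun _ _ => by ring
  have tot : ∑ x, ∑ y, ∑ z,
      (T x y z * u x * u y * u z + T x z y * u x * u y * u z
       + T y x z * u x * u y * u z + T y z x * u x * u y * u z
       + T z x y * u x * u y * u z + T z y x * u x * u y * u z) = 0 :=
    Finset.sum_eq_zero fun x _ => Finset.sum_eq_zero fun y _ =>
      Finset.sum_eq_zero fun z _ => by
        linear_combination (u x * u y * u z) * h x y z
  simp only [Finset.sum_add_distrib] at tot
  linarith [e2, e3, e4, e5, e6, tot]

lemma eta_cancel (η : Matrix (Fin N) (Fin N) ℝ) (hηi : IsUnit η.det) (v : Fin N → ℝ)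
    (h : ∀ k, ∑ q, η k q * v q = 0) : ∀ q, v q = 0 := by
  have hm : η.mulVec v = 0 := by
    funext k; simpa [Matrix.mulVec, dotProduct] using h k
  have h2 := congrArg (fun w => η⁻¹.mulVec w) hm
  simp only [Matrix.mulVec_mulVec, Matrix.nonsing_inv_mul η hηi, Matrix.one_mulVec,
    Matrix.mulVec_zero] at h2
  intro q; exact congrFun h2 q

lemma sum_comm3 (f : Fin N → Fin N → Fin N → ℝ) :
    ∑ r, ∑ m, ∑ n, f r m n = ∑ m, ∑ n, ∑ r, f r m n :=
  (sc_outer f).trans (Finset.sum_congr rfl fun _ _ => Finset.sum_comm)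

def Bc (η : Matrix (Fin N) (Fin N) ℝ) (c : Fin N → Fin N → Fin N → Fin N → ℝ)
    (i j k l m n : Fin N) : ℝ :=
  ∑ s, ∑ p, c i k s m * η s p * c j p l n

variable {η : Matrix (Fin N) (Fin N) ℝ} {a : Fin N → Fin N → Fin N → Fin N → ℝ}

lemma ass1_eval (hc1 : ∀ i j k l, c i j k l = c i k j l)
    (hc2 : ∀ i j k l, c i j k l = c i j l k)
    (hH : ∀ i u, H i u = ∑ j, ∑ k, ∑ l, c i j k l * u j * u k * u l)
    (i j k l : Fin N) (u : Fin N → ℝ) :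
    ∑ s, ∑ p, pd2 k s (H i) u * η s p * pd2 p l (H j) u
      = ∑ m, ∑ n, (36 * Bc η c i j k l m n) * u m * u n :=
  calc ∑ s, ∑ p, pd2 k s (H i) u * η s p * pd2 p l (H j) u
      = ∑ s, ∑ p, ∑ m, ∑ n, (36 * (c i k s m * η s p * c j p l n)) * (u m * u n) := by
        refine Finset.sum_congr rfl fun s _ => Finset.sum_congr rfl fun p _ => ?_
        rw [pd2_H hc1 hc2 hH k s i u, pd2_H hc1 hc2 hH p l j u]
        simp only [Finset.sum_mul, Finset.mul_sum]
        rw [Finset.sum_comm]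
        exact Finset.sum_congr rfl fun m _ => Finset.sum_congr rfl fun n _ => by ring
    _ = ∑ m, ∑ n, ∑ s, ∑ p, (36 * (c i k s m * η s p * c j p l n)) * (u m * u n) :=
        sum_comm4a _
    _ = ∑ m, ∑ n, (36 * Bc η c i j k l m n) * u m * u n := by
        refine Finset.sum_congr rfl fun m _ => Finset.sum_congr rfl fun n _ => ?_
        simp only [Bc, Finset.sum_mul, Finset.mul_sum]
        exact Finset.sum_congr rfl fun s _ => Finset.sum_congr rfl fun p _ => by ring

lemma piece (hc2 : ∀ i j k l, c i j k l = c i j l k)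
    (ha : ∀ i j k l, a i j k l = ∑ s, η i s * c j s k l)
    (k i m j n l : Fin N) :
    ∑ s, a k i m s * a s j n l = ∑ q, η k q * Bc η c i j q l m n :=
  calc ∑ s, a k i m s * a s j n l
      = ∑ s, ∑ q, ∑ p, (η k q * c i q m s) * (η s p * c j p n l) := by
        refine Finset.sum_congr rfl fun s _ => ?_
        rw [ha k i m s, ha s j n l]
        simp only [Finset.sum_mul, Finset.mul_sum]
        exact Finset.sum_comm
    _ = ∑ q, ∑ s, ∑ p, (η k q * c i q m s) * (η s p * c j p n l) := sc_outer _
    _ = ∑ q, η k q * Bc η c i j q l m n := by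
        refine Finset.sum_congr rfl fun q _ => ?_
        simp only [Bc, Finset.mul_sum]
        exact Finset.sum_congr rfl fun s _ => Finset.sum_congr rfl fun p _ => by
          rw [hc2 i q m s, hc2 j p n l]; ring

lemma target1_eq (hc2 : ∀ i j k l, c i j k l = c i j l k)
    (ha : ∀ i j k l, a i j k l = ∑ s, η i s * c j s k l)
    (k i m j n l : Fin N) :
    ∑ s, (a k i m s * a s j n l - a k j n s * a s i m l
        + a k i n s * a s j m l - a k j m s * a s i n l)
      = ∑ q, η k q * (Bc η c i j q l m n + Bc η c i j q l n m
          - Bc η c j i q l m n - Bc η c j i q l n m) := by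
  have h1 := piece hc2 ha k i m j n l
  have h2 := piece hc2 ha k j n i m l
  have h3 := piece hc2 ha k i n j m l
  have h4 := piece hc2 ha k j m i n l
  simp only [Finset.sum_add_distrib, Finset.sum_sub_distrib]
  rw [h1, h2, h3, h4, ← Finset.sum_sub_distrib, ← Finset.sum_add_distrib,
    ← Finset.sum_sub_distrib]
  exact Finset.sum_congr rfl fun q _ => by ring

lemma a_swap (hc2 : ∀ i j k l, c i j k l = c i j l k)
    (ha : ∀ i j k l, a i j k l = ∑ s, η i s * c j s k l)
    (i j k l : Fin N) : a i j k l = a i j l k := by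
  rw [ha, ha]
  exact Finset.sum_congr rfl fun s _ => by rw [hc2]

lemma bracket_eval (K₁ : ℝ) (hc1 : ∀ i j k l, c i j k l = c i k j l)
    (hc2 : ∀ i j k l, c i j k l = c i j l k)
    (hH : ∀ i u, H i u = ∑ j, ∑ k, ∑ l, c i j k l * u j * u k * u l)
    (ha : ∀ i j k l, a i j k l = ∑ s, η i s * c j s k l)
    (i s : Fin N) (u : Fin N → ℝ) :
    (∑ r, η i r * pd r (H s) u) + (∑ r, η s r * pd r (H i) u) - K₁ * u i * u s
      = ∑ m, ∑ n, (3 * a i s m n + 3 * a s i m n - K₁ * kd i m * kd s n) * (u m * u n) := by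
  have c1 : ∀ (x y : Fin N), ∑ r, η x r * pd r (H y) u
      = ∑ m, ∑ n, (3 * a x y m n) * (u m * u n) := by
    intro x y
    calc ∑ r, η x r * pd r (H y) u
        = ∑ r, ∑ m, ∑ n, η x r * ((3 * c y r m n) * u m * u n) := by
          refine Finset.sum_congr rfl fun r _ => ?_
          rw [pd_H hc1 hc2 hH y r u, Finset.mul_sum]
          exact Finset.sum_congr rfl fun m _ => (Finset.mul_sum _ _ _)
      _ = ∑ m, ∑ n, ∑ r, η x r * ((3 * c y r m n) * u m * u n) := sum_comm3 _
      _ = ∑ m, ∑ n, (3 * a x y m n) * (u m * u n) := by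
          refine Finset.sum_congr rfl fun m _ => Finset.sum_congr rfl fun n _ => ?_
          rw [ha x y m n]
          simp only [Finset.mul_sum, Finset.sum_mul]
          exact Finset.sum_congr rfl fun r _ => by ring
  have c3 : K₁ * u i * u s = ∑ m, ∑ n, (K₁ * kd i m * kd s n) * (u m * u n) := by
    simp only [kd, mul_ite, ite_mul, mul_one, mul_zero, one_mul, zero_mul,
      Finset.sum_ite_eq, Finset.sum_ite_eq', Finset.mem_univ, if_true]
    ring
  rw [c1 i s, c1 s i, c3, ← Finset.sum_add_distrib, ← Finset.sum_sub_distrib]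
  refine Finset.sum_congr rfl fun m _ => ?_
  rw [← Finset.sum_add_distrib, ← Finset.sum_sub_distrib]
  exact Finset.sum_congr rfl fun n _ => by ring

lemma factor_eval (hc1 : ∀ i j k l, c i j k l = c i k j l)
    (hc2 : ∀ i j k l, c i j k l = c i j l k)
    (hH : ∀ i u, H i u = ∑ j, ∑ k, ∑ l, c i j k l * u j * u k * u l)
    (ha : ∀ i j k l, a i j k l = ∑ s, η i s * c j s k l)
    (j k s : Fin N) (u : Fin N → ℝ) :
    ∑ p, η j p * pd2 p s (H k) u = ∑ l, (6 * a j k l s) * u l := by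
  calc ∑ p, η j p * pd2 p s (H k) u
      = ∑ p, ∑ l, η j p * ((6 * c k p s l) * u l) := by
        refine Finset.sum_congr rfl fun p _ => ?_
        rw [pd2_H hc1 hc2 hH p s k u, Finset.mul_sum]
    _ = ∑ l, ∑ p, η j p * ((6 * c k p s l) * u l) := Finset.sum_comm
    _ = ∑ l, (6 * a j k l s) * u l := by
        refine Finset.sum_congr rfl fun l _ => ?_
        rw [a_swap hc2 ha j k l s, ha j k s l]
        simp only [Finset.mul_sum, Finset.sum_mul]
        exact Finset.sum_congr rfl fun p _ => by ring

lemma ass2_eval (K₁ : ℝ) (hc1 : ∀ i j k l, c i j k l = c i k j l)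
    (hc2 : ∀ i j k l, c i j k l = c i j l k)
    (hH : ∀ i u, H i u = ∑ j, ∑ k, ∑ l, c i j k l * u j * u k * u l)
    (ha : ∀ i j k l, a i j k l = ∑ s, η i s * c j s k l)
    (i j k : Fin N) (u : Fin N → ℝ) :
    ∑ s, ∑ p, ((∑ r, η i r * pd r (H s) u) + (∑ r, η s r * pd r (H i) u) - K₁ * u i * u s)
        * η j p * pd2 p s (H k) u
      = ∑ l, ∑ m, ∑ n,
          (6 * ∑ s, (3 * a i s m n + 3 * a s i m n - K₁ * kd i m * kd s n) * a j k l s)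
            * u l * u m * u n := by
  calc ∑ s, ∑ p, ((∑ r, η i r * pd r (H s) u) + (∑ r, η s r * pd r (H i) u) - K₁ * u i * u s)
        * η j p * pd2 p s (H k) u
      = ∑ s, (∑ m, ∑ n, (3 * a i s m n + 3 * a s i m n - K₁ * kd i m * kd s n) * (u m * u n))
          * (∑ l, (6 * a j k l s) * u l) := by
        refine Finset.sum_congr rfl fun s _ => ?_
        rw [← bracket_eval K₁ hc1 hc2 hH ha i s u, ← factor_eval hc1 hc2 hH ha j k s u,
          Finset.mul_sum]
        exact Finset.sum_congr rfl fun p _ => by ring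
    _ = ∑ s, ∑ m, ∑ n, ∑ l,
          ((3 * a i s m n + 3 * a s i m n - K₁ * kd i m * kd s n) * (u m * u n))
            * ((6 * a j k l s) * u l) := by
        refine Finset.sum_congr rfl fun s _ => ?_
        simp only [Finset.sum_mul, Finset.mul_sum]
        exact sum_comm3 _
    _ = ∑ l, ∑ m, ∑ n, ∑ s,
          ((3 * a i s m n + 3 * a s i m n - K₁ * kd i m * kd s n) * (u m * u n))
            * ((6 * a j k l s) * u l) := sum_comm4b _
    _ = ∑ l, ∑ m, ∑ n,
          (6 * ∑ s, (3 * a i s m n + 3 * a s i m n - K₁ * kd i m * kd s n) * a j k l s)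
            * u l * u m * u n := by
        refine Finset.sum_congr rfl fun l _ => Finset.sum_congr rfl fun m _ =>
          Finset.sum_congr rfl fun n _ => ?_
        rw [Finset.mul_sum, Finset.sum_mul, Finset.sum_mul, Finset.sum_mul]
        exact Finset.sum_congr rfl fun s _ => by ring


lemma split3 {N : ℕ} (F G : Fin N → Fin N → Fin N → ℝ) (u : Fin N → ℝ) :
    ∑ l, ∑ m, ∑ n, (F l m n - G l m n) * u l * u m * u n
      = (∑ l, ∑ m, ∑ n, F l m n * u l * u m * u n)
        - ∑ l, ∑ m, ∑ n, G l m n * u l * u m * u n :=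
  calc ∑ l, ∑ m, ∑ n, (F l m n - G l m n) * u l * u m * u n
      = ∑ l, ∑ m, ∑ n, (F l m n * u l * u m * u n - G l m n * u l * u m * u n) :=
        Finset.sum_congr rfl fun _ _ => Finset.sum_congr rfl fun _ _ =>
          Finset.sum_congr rfl fun _ _ => by ring
    _ = _ := by simp only [Finset.sum_sub_distrib]

/-- For cubic functions `H^i(u) = c^i_{jkl} u^j u^k u^l` (with `c` fully symmetric
in its lower indices) and a constant symmetric invertible matrix `η`, the systems
(ass1), (ass2) hold everywhere iff the structure constants
`a^{ij}_{kl} = η^{is} c^j_{skl}` satisfy the two displayed relations (the second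
summed over all six permutations of `l, m, n`). -/
theorem stmt_6 {N : ℕ} (η : Matrix (Fin N) (Fin N) ℝ) (hηs : η.IsSymm)
    (hηi : IsUnit η.det) (K₁ : ℝ)
    (c : Fin N → Fin N → Fin N → Fin N → ℝ)
    (hc1 : ∀ i j k l, c i j k l = c i k j l)
    (hc2 : ∀ i j k l, c i j k l = c i j l k)
    (H : Fin N → (Fin N → ℝ) → ℝ)
    (hH : ∀ i u, H i u = ∑ j, ∑ k, ∑ l, c i j k l * u j * u k * u l)
    (a : Fin N → Fin N → Fin N → Fin N → ℝ)
    (ha : ∀ i j k l, a i j k l = ∑ s, η i s * c j s k l) :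
    (∀ u : Fin N → ℝ, Ass1 η H u ∧ Ass2 η K₁ H u) ↔
    ((∀ k i m j n l, ∑ s, (a k i m s * a s j n l - a k j n s * a s i m l
        + a k i n s * a s j m l - a k j m s * a s i n l) = 0) ∧
     (∀ i j k l m n,
        cubicTerm a K₁ i j k l m n + cubicTerm a K₁ i j k l n m
        + cubicTerm a K₁ i j k m l n + cubicTerm a K₁ i j k m n l
        + cubicTerm a K₁ i j k n l m + cubicTerm a K₁ i j k n m l = 0)) := by
  have key1 : (∀ u : Fin N → ℝ, Ass1 η H u) ↔
      (∀ k i m j n l, ∑ s, (a k i m s * a s j n l - a k j n s * a s i m l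
        + a k i n s * a s j m l - a k j m s * a s i n l) = 0) := by
    constructor
    · intro hu k i m j n l
      rw [target1_eq hc2 ha k i m j n l]
      refine Finset.sum_eq_zero fun q _ => ?_
      have hq : ∀ u : Fin N → ℝ, ∑ m', ∑ n',
          (36 * Bc η c i j q l m' n' - 36 * Bc η c j i q l m' n') * u m' * u n' = 0 := by
        intro u
        have h := hu u i j q l
        rw [ass1_eval hc1 hc2 hH i j q l u, ass1_eval hc1 hc2 hH j i q l u] at h
        simp only [sub_mul, Finset.sum_sub_distrib]
        rw [h, sub_self]
      have h2 := quad_ext hq m n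
      have h3 : Bc η c i j q l m n + Bc η c i j q l n m
          - Bc η c j i q l m n - Bc η c j i q l n m = 0 := by linarith
      rw [h3, mul_zero]
    · intro hC u i j k l
      rw [ass1_eval hc1 hc2 hH i j k l u, ass1_eval hc1 hc2 hH j i k l u]
      have key : ∀ m n : Fin N,
          (36 * Bc η c i j k l m n - 36 * Bc η c j i k l m n)
          + (36 * Bc η c i j k l n m - 36 * Bc η c j i k l n m) = 0 := by
        intro m n
        have hv := eta_cancel η hηi
          (fun q => Bc η c i j q l m n + Bc η c i j q l n m
            - Bc η c j i q l m n - Bc η c j i q l n m)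
          (fun k' => ((target1_eq hc2 ha k' i m j n l).symm).trans (hC k' i m j n l)) k
        linarith
      have hz := quad_syn (B := fun m n =>
          36 * Bc η c i j k l m n - 36 * Bc η c j i k l m n) key u
      simp only [sub_mul, Finset.sum_sub_distrib] at hz
      linarith
  have key2 : (∀ u : Fin N → ℝ, Ass2 η K₁ H u) ↔
      (∀ i j k l m n,
        cubicTerm a K₁ i j k l m n + cubicTerm a K₁ i j k l n m
        + cubicTerm a K₁ i j k m l n + cubicTerm a K₁ i j k m n l
        + cubicTerm a K₁ i j k n l m + cubicTerm a K₁ i j k n m l = 0) := by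
    have hW : ∀ i j k l m n, (6 * ∑ s, (3 * a i s m n + 3 * a s i m n
          - K₁ * kd i m * kd s n) * a j k l s)
        - (6 * ∑ s, (3 * a j s m n + 3 * a s j m n
          - K₁ * kd j m * kd s n) * a i k l s)
        = 6 * cubicTerm a K₁ i j k l m n := by
      intro i j k l m n
      rw [cubicTerm, Finset.sum_sub_distrib]
      ring
    constructor
    · intro hu i j k l m n
      have hq : ∀ u : Fin N → ℝ, ∑ l', ∑ m', ∑ n',
          (6 * cubicTerm a K₁ i j k l' m' n') * u l' * u m' * u n' = 0 := by
        intro u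
        have h := hu u i j k
        rw [ass2_eval K₁ hc1 hc2 hH ha i j k u, ass2_eval K₁ hc1 hc2 hH ha j i k u] at h
        have : ∑ l', ∑ m', ∑ n',
            ((6 * ∑ s, (3 * a i s m' n' + 3 * a s i m' n' - K₁ * kd i m' * kd s n') * a j k l' s)
             - (6 * ∑ s, (3 * a j s m' n' + 3 * a s j m' n' - K₁ * kd j m' * kd s n') * a i k l' s))
              * u l' * u m' * u n' = 0 := by
          rw [split3, h, sub_self]
        calc ∑ l', ∑ m', ∑ n', (6 * cubicTerm a K₁ i j k l' m' n') * u l' * u m' * u n'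
            = ∑ l', ∑ m', ∑ n',
              ((6 * ∑ s, (3 * a i s m' n' + 3 * a s i m' n' - K₁ * kd i m' * kd s n') * a j k l' s)
               - (6 * ∑ s, (3 * a j s m' n' + 3 * a s j m' n' - K₁ * kd j m' * kd s n') * a i k l' s))
                * u l' * u m' * u n' :=
              Finset.sum_congr rfl fun l' _ => Finset.sum_congr rfl fun m' _ =>
                Finset.sum_congr rfl fun n' _ => by rw [hW i j k l' m' n']
          _ = 0 := this
      have h6 := cubic_ext hq l m n
      linarith
    · intro hC u i j k
      rw [ass2_eval K₁ hc1 hc2 hH ha i j k u, ass2_eval K₁ hc1 hc2 hH ha j i k u]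
      have key : ∀ l m n : Fin N, (6 * cubicTerm a K₁ i j k l m n)
          + (6 * cubicTerm a K₁ i j k l n m) + (6 * cubicTerm a K₁ i j k m l n)
          + (6 * cubicTerm a K₁ i j k m n l) + (6 * cubicTerm a K₁ i j k n l m)
          + (6 * cubicTerm a K₁ i j k n m l) = 0 := by
        intro l m n
        have := hC i j k l m n
        linarith
      have hz := cubic_syn' (T := fun l m n => 6 * cubicTerm a K₁ i j k l m n) key u
      have hz2 : ∑ l, ∑ m, ∑ n,
          ((6 * ∑ s, (3 * a i s m n + 3 * a s i m n - K₁ * kd i m * kd s n) * a j k l s)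
           - (6 * ∑ s, (3 * a j s m n + 3 * a s j m n - K₁ * kd j m * kd s n) * a i k l s))
            * u l * u m * u n = 0 :=
        (Finset.sum_congr rfl fun l _ => Finset.sum_congr rfl fun m _ =>
          Finset.sum_congr rfl fun n _ => by rw [hW i j k l m n]).trans hz
      rw [split3] at hz2
      linarith
  constructor
  · intro h
    exact ⟨key1.mp fun u => (h u).1, key2.mp fun u => (h u).2⟩
  · intro h u
    exact ⟨key1.mpr h.1 u, key2.mpr h.2 u⟩
end

section
/- Let η^{ij} be a constant symmetric invertible real N×N matrix, K₁ ∈ ℝ, and let a^{ij}_{kl} be real constants with a^{ij}_{kl} = a^{ij}_{lk} satisfying the relations Σ_s (a^{ki}_{ms} a^{sj}_{nl} − a^{kj}_{ns} a^{si}_{ml} + a^{ki}_{ns} a^{sj}_{ml} − a^{kj}_{ms} a^{si}_{nl}) = 0 and Σ_{[l,m,n]} Σ_s [ (3 a^{is}_{mn} + 3 a^{si}_{mn} − K₁ δ^i_m δ^s_n) a^{jk}_{ls} − (3 a^{js}_{mn} + 3 a^{sj}_{mn} − K₁ δ^j_m δ^s_n) a^{ik}_{ls} ] = 0 (Σ_{[l,m,n]}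 is the sum over all permutations of l,m,n), and suppose a^{ij}_{kl} = Σ_s η^{is} c^j_{skl} for some real constants c^j_{skl} that are fully symmetric in the lower indices s,k,l. Then for every u = (u^1,…,u^N) ∈ ℝ^N, the N-dimensional real algebra C(u) with basis e^1,…,e^N and multiplication e^i * e^j = Σ_{l,k} a^{ij}_{lk} u^l e^k satisfies the identity (x*y)*z = (x*z)*y for all x,y,z, and the two symmetric bilinear forms defined on basis elements by (e^i, e^j) = η^{ij} and ⟨e^i, e^j⟩ = Σ_{k,l} 3(a^{ij}_{kl} + a^{ji}_{kl}) u^k u^l − K₁ u^i u^j are invariant, i.e. (x*y, z) = (x, z*y) and ⟨x*y, z⟩ = ⟨x, z*y⟩ for all x,y,z in C(u). -/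
section Helpers

variable {α : Type*} [Fintype α] {M : Type*} [AddCommMonoid M]

private lemma sswap (f : α → α → M) : ∑ i, ∑ j, f i j = ∑ j, ∑ i, f i j :=
  Finset.sum_comm

private lemma s3_13 (f : α → α → α → M) :
    ∑ i, ∑ j, ∑ k, f i j k = ∑ k, ∑ j, ∑ i, f i j k := by
  calc ∑ i, ∑ j, ∑ k, f i j k
      = ∑ i, ∑ k, ∑ j, f i j k :=
        Finset.sum_congr rfl fun i _ => Finset.sum_comm
    _ = ∑ k, ∑ i, ∑ j, f i j k := Finset.sum_comm
    _ = ∑ k, ∑ j, ∑ i, f i j k :=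
        Finset.sum_congr rfl fun k _ => Finset.sum_comm

private lemma s3_cyc (f : α → α → α → M) :
    ∑ i, ∑ j, ∑ k, f i j k = ∑ j, ∑ k, ∑ i, f i j k := by
  calc ∑ i, ∑ j, ∑ k, f i j k
      = ∑ j, ∑ i, ∑ k, f i j k := Finset.sum_comm
    _ = ∑ j, ∑ k, ∑ i, f i j k :=
        Finset.sum_congr rfl fun j _ => Finset.sum_comm

private lemma s4 (f : α → α → α → α → M) :
    ∑ i, ∑ j, ∑ p, ∑ q, f i j p q = ∑ p, ∑ q, ∑ j, ∑ i, f i j p q := by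
  calc ∑ i, ∑ j, ∑ p, ∑ q, f i j p q
      = ∑ i, ∑ p, ∑ j, ∑ q, f i j p q :=
        Finset.sum_congr rfl fun i _ => Finset.sum_comm
    _ = ∑ p, ∑ i, ∑ j, ∑ q, f i j p q := Finset.sum_comm
    _ = ∑ p, ∑ q, ∑ j, ∑ i, f i j p q :=
        Finset.sum_congr rfl fun p _ => s3_13 (fun i j q => f i j p q)

end Helpers

/-- For structure constants `a^{ij}_{kl}` symmetric in the lower indices, arising
as `a^{ij}_{kl} = η^{is} c^j_{skl}` from fully symmetric `c`, and satisfying the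
two relations of cubic solutions of (ass1), (ass2), the algebra `C(u)` with
multiplication `e^i * e^j = a^{ij}_{lk} u^l e^k` satisfies `(x*y)*z = (x*z)*y`,
and both bilinear forms `(e^i, e^j) = η^{ij}` and
`⟨e^i, e^j⟩ = 3(a^{ij}_{kl} + a^{ji}_{kl}) u^k u^l − K₁ u^i u^j` are invariant. -/
theorem stmt_7 {N : ℕ} (η : Matrix (Fin N) (Fin N) ℝ) (hηs : η.IsSymm)
    (hηi : IsUnit η.det) (K₁ : ℝ)
    (a : Fin N → Fin N → Fin N → Fin N → ℝ)
    (hsym : ∀ i j k l, a i j k l = a i j l k)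
    (hfrom : ∃ c : Fin N → Fin N → Fin N → Fin N → ℝ,
        (∀ j s k l, c j s k l = c j k s l) ∧ (∀ j s k l, c j s k l = c j s l k) ∧
        (∀ i j k l, a i j k l = ∑ s, η i s * c j s k l))
    (h1 : ∀ k i m j n l, ∑ s, (a k i m s * a s j n l - a k j n s * a s i m l
        + a k i n s * a s j m l - a k j m s * a s i n l) = 0)
    (h2 : ∀ i j k l m n,
        cubicTerm a K₁ i j k l m n + cubicTerm a K₁ i j k l n m
        + cubicTerm a K₁ i j k m l n + cubicTerm a K₁ i j k m n l
        + cubicTerm a K₁ i j k n l m + cubicTerm a K₁ i j k n m l = 0)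
    (u : Fin N → ℝ)
    (mul : (Fin N → ℝ) → (Fin N → ℝ) → (Fin N → ℝ))
    (hmul : ∀ x y : Fin N → ℝ, ∀ k,
        mul x y k = ∑ i, ∑ j, x i * y j * (∑ l, a i j l k * u l))
    (P : (Fin N → ℝ) → (Fin N → ℝ) → ℝ)
    (hP : ∀ x y, P x y = ∑ i, ∑ j, x i * y j * η i j)
    (Q : (Fin N → ℝ) → (Fin N → ℝ) → ℝ)
    (hQ : ∀ x y, Q x y = ∑ i, ∑ j, x i * y j
        * ((∑ k, ∑ l, 3 * (a i j k l + a j i k l) * u k * u l) - K₁ * u i * u j)) :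
    (∀ x y z, mul (mul x y) z = mul (mul x z) y) ∧
    (∀ x y z, P (mul x y) z = P x (mul z y)) ∧
    (∀ x y z, Q (mul x y) z = Q x (mul z y)) := by
  obtain ⟨c, hc1, hc2, hca⟩ := hfrom
  -- canonical expansion of ∑ i, ∑ j, (x*y)ᵢ zⱼ B i j
  have helperL : ∀ (B : Fin N → Fin N → ℝ) (x y z : Fin N → ℝ),
      (∑ i, ∑ j, mul x y i * z j * B i j)
      = ∑ p, ∑ q, ∑ r, x p * y q * z r
          * (∑ s, (∑ m, a p q m s * u m) * B s r) := by
    intro B x y z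
    have step1 : ∀ i j, mul x y i * z j * B i j
        = ∑ p, ∑ q, x p * y q * (∑ m, a p q m i * u m) * z j * B i j := by
      intro i j
      rw [hmul]
      simp only [Finset.sum_mul]
    calc ∑ i, ∑ j, mul x y i * z j * B i j
        = ∑ i, ∑ j, ∑ p, ∑ q,
            x p * y q * (∑ m, a p q m i * u m) * z j * B i j :=
          Finset.sum_congr rfl fun i _ => Finset.sum_congr rfl fun j _ => step1 i j
      _ = ∑ p, ∑ q, ∑ j, ∑ i,
            x p * y q * (∑ m, a p q m i * u m) * z j * B i j :=
          s4 (fun i j p q => x p * y q * (∑ m, a p q m i * u m) * z j * B i j)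
      _ = ∑ p, ∑ q, ∑ r, x p * y q * z r
            * (∑ s, (∑ m, a p q m s * u m) * B s r) := by
          refine Finset.sum_congr rfl fun p _ => Finset.sum_congr rfl fun q _ =>
            Finset.sum_congr rfl fun r _ => ?_
          rw [Finset.mul_sum]
          exact Finset.sum_congr rfl fun s _ => by ring
  -- canonical expansion of ∑ i, ∑ j, xᵢ (z*y)ⱼ B i j
  have helperR : ∀ (B : Fin N → Fin N → ℝ) (x y z : Fin N → ℝ),
      (∑ i, ∑ j, x i * mul z y j * B i j)
      = ∑ p, ∑ q, ∑ r, x p * y q * z r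
          * (∑ s, (∑ m, a r q m s * u m) * B p s) := by
    intro B x y z
    calc (∑ i, ∑ j, x i * mul z y j * B i j)
        = ∑ i, ∑ j, mul z y i * x j * B j i := by
          rw [sswap (fun i j => x i * mul z y j * B i j)]
          exact Finset.sum_congr rfl fun i _ => Finset.sum_congr rfl fun j _ => by ring
      _ = ∑ p, ∑ q, ∑ r, z p * y q * x r
            * (∑ s, (∑ m, a p q m s * u m) * B r s) := helperL (fun i j => B j i) z y x
      _ = ∑ p, ∑ q, ∑ r, x p * y q * z r
            * (∑ s, (∑ m, a r q m s * u m) * B p s) := by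
          rw [s3_13 (fun p q r => z p * y q * x r
            * (∑ s, (∑ m, a p q m s * u m) * B r s))]
          exact Finset.sum_congr rfl fun p _ => Finset.sum_congr rfl fun q _ =>
            Finset.sum_congr rfl fun r _ => by ring
  -- Key identity from h1
  have key1 : ∀ p q r k,
      (∑ s, (∑ m, a p q m s * u m) * (∑ l, a s r l k * u l))
      = ∑ s, (∑ m, a p r m s * u m) * (∑ l, a s q l k * u l) := by
    intro p q r k
    have h0 : ∑ m, ∑ l, (∑ s, (a p q m s * a s r l k - a p r l s * a s q m k
        + a p q l s * a s r m k - a p r m s * a s q l k)) * (u m * u l) = 0 := by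
      simp only [h1, zero_mul, Finset.sum_const_zero]
    simp only [Finset.sum_mul, sub_mul, add_mul, Finset.sum_sub_distrib,
      Finset.sum_add_distrib] at h0
    have e31 : (∑ m, ∑ l, ∑ s, a p q l s * a s r m k * (u m * u l))
        = ∑ m, ∑ l, ∑ s, a p q m s * a s r l k * (u m * u l) := by
      rw [sswap (fun m l => ∑ s, a p q l s * a s r m k * (u m * u l))]
      exact Finset.sum_congr rfl fun m _ => Finset.sum_congr rfl fun l _ =>
        Finset.sum_congr rfl fun s _ => by ring
    have e24 : (∑ m, ∑ l, ∑ s, a p r l s * a s q m k * (u m * u l))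
        = ∑ m, ∑ l, ∑ s, a p r m s * a s q l k * (u m * u l) := by
      rw [sswap (fun m l => ∑ s, a p r l s * a s q m k * (u m * u l))]
      exact Finset.sum_congr rfl fun m _ => Finset.sum_congr rfl fun l _ =>
        Finset.sum_congr rfl fun s _ => by ring
    have lhs_eq : (∑ s, (∑ m, a p q m s * u m) * (∑ l, a s r l k * u l))
        = ∑ m, ∑ l, ∑ s, a p q m s * a s r l k * (u m * u l) := by
      calc (∑ s, (∑ m, a p q m s * u m) * (∑ l, a s r l k * u l))
          = ∑ s, ∑ m, ∑ l, (a p q m s * u m) * (a s r l k * u l) :=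
            Finset.sum_congr rfl fun s _ => Finset.sum_mul_sum _ _ _ _
        _ = ∑ m, ∑ l, ∑ s, (a p q m s * u m) * (a s r l k * u l) :=
            s3_cyc (fun s m l => (a p q m s * u m) * (a s r l k * u l))
        _ = ∑ m, ∑ l, ∑ s, a p q m s * a s r l k * (u m * u l) :=
            Finset.sum_congr rfl fun m _ => Finset.sum_congr rfl fun l _ =>
              Finset.sum_congr rfl fun s _ => by ring
    have rhs_eq : (∑ s, (∑ m, a p r m s * u m) * (∑ l, a s q l k * u l))
        = ∑ m, ∑ l, ∑ s, a p r m s * a s q l k * (u m * u l) := by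
      calc (∑ s, (∑ m, a p r m s * u m) * (∑ l, a s q l k * u l))
          = ∑ s, ∑ m, ∑ l, (a p r m s * u m) * (a s q l k * u l) :=
            Finset.sum_congr rfl fun s _ => Finset.sum_mul_sum _ _ _ _
        _ = ∑ m, ∑ l, ∑ s, (a p r m s * u m) * (a s q l k * u l) :=
            s3_cyc (fun s m l => (a p r m s * u m) * (a s q l k * u l))
        _ = ∑ m, ∑ l, ∑ s, a p r m s * a s q l k * (u m * u l) :=
            Finset.sum_congr rfl fun m _ => Finset.sum_congr rfl fun l _ =>
              Finset.sum_congr rfl fun s _ => by ring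
    rw [lhs_eq, rhs_eq]
    rw [e31, e24] at h0
    linarith
  -- Part 1
  have part1 : ∀ x y z, mul (mul x y) z = mul (mul x z) y := by
    intro x y z
    funext k
    rw [hmul (mul x y) z k, hmul (mul x z) y k,
      helperL (fun i j => ∑ l, a i j l k * u l) x y z,
      helperL (fun i j => ∑ l, a i j l k * u l) x z y]
    have swapqr : (∑ p, ∑ q, ∑ r, x p * z q * y r
          * (∑ s, (∑ m, a p q m s * u m) * (∑ l, a s r l k * u l)))
        = ∑ p, ∑ q, ∑ r, x p * y q * z r
          * (∑ s, (∑ m, a p r m s * u m) * (∑ l, a s q l k * u l)) := by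
      refine Finset.sum_congr rfl fun p _ => ?_
      rw [sswap (fun q r => x p * z q * y r
        * (∑ s, (∑ m, a p q m s * u m) * (∑ l, a s r l k * u l)))]
      exact Finset.sum_congr rfl fun q _ => Finset.sum_congr rfl fun r _ => by ring
    rw [swapqr]
    exact Finset.sum_congr rfl fun p _ => Finset.sum_congr rfl fun q _ =>
      Finset.sum_congr rfl fun r _ => by rw [key1 p q r k]
  -- Key identity from hfrom (invariance of η)
  have hcsym : ∀ j s m t, c j s m t = c j t m s := by
    intro j s m t
    rw [hc2 j s m t, hc1 j s t m, hc2 j t s m]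
  have key2 : ∀ p q r m, (∑ s, a p q m s * η s r) = ∑ s, η p s * a r q m s := by
    intro p q r m
    calc (∑ s, a p q m s * η s r)
        = ∑ s, (∑ t, η p t * c q t m s) * η s r :=
          Finset.sum_congr rfl fun s _ => by rw [hca p q m s]
      _ = ∑ s, ∑ t, η p t * c q t m s * η s r :=
          Finset.sum_congr rfl fun s _ => Finset.sum_mul _ _ _
      _ = ∑ t, ∑ s, η p t * c q t m s * η s r :=
          sswap (fun s t => η p t * c q t m s * η s r)
      _ = ∑ s, ∑ t, η p s * (η r t * c q t m s) := by
          refine Finset.sum_congr rfl fun s _ => Finset.sum_congr rfl fun t _ => ?_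
          rw [hcsym q s m t, hηs.apply r t]
          ring
      _ = ∑ s, η p s * (∑ t, η r t * c q t m s) :=
          Finset.sum_congr rfl fun s _ => (Finset.mul_sum _ _ _).symm
      _ = ∑ s, η p s * a r q m s :=
          Finset.sum_congr rfl fun s _ => by rw [hca r q m s]
  have keyP : ∀ p q r, (∑ s, (∑ m, a p q m s * u m) * η s r)
      = ∑ s, (∑ m, a r q m s * u m) * η p s := by
    intro p q r
    calc (∑ s, (∑ m, a p q m s * u m) * η s r)
        = ∑ s, ∑ m, a p q m s * u m * η s r :=
          Finset.sum_congr rfl fun s _ => Finset.sum_mul _ _ _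
      _ = ∑ m, ∑ s, a p q m s * u m * η s r :=
          sswap (fun s m => a p q m s * u m * η s r)
      _ = ∑ m, (∑ s, a p q m s * η s r) * u m := by
          refine Finset.sum_congr rfl fun m _ => ?_
          rw [Finset.sum_mul]
          exact Finset.sum_congr rfl fun s _ => by ring
      _ = ∑ m, (∑ s, η p s * a r q m s) * u m :=
          Finset.sum_congr rfl fun m _ => by rw [key2 p q r m]
      _ = ∑ m, ∑ s, η p s * a r q m s * u m :=
          Finset.sum_congr rfl fun m _ => Finset.sum_mul _ _ _
      _ = ∑ s, ∑ m, η p s * a r q m s * u m :=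
          sswap (fun m s => η p s * a r q m s * u m)
      _ = ∑ s, (∑ m, a r q m s * u m) * η p s := by
          refine Finset.sum_congr rfl fun s _ => ?_
          rw [Finset.sum_mul]
          exact Finset.sum_congr rfl fun m _ => by ring
  -- Part 2
  have part2 : ∀ x y z, P (mul x y) z = P x (mul z y) := by
    intro x y z
    rw [hP (mul x y) z, hP x (mul z y),
      helperL (fun i j => η i j) x y z, helperR (fun i j => η i j) x y z]
    exact Finset.sum_congr rfl fun p _ => Finset.sum_congr rfl fun q _ =>
      Finset.sum_congr rfl fun r _ => by rw [keyP p q r]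
  -- Part 3 machinery
  have kdsum : ∀ (s : Fin N) (f : Fin N → ℝ), (∑ n, kd s n * f n) = f s := by
    intro s f
    simp [kd]
  -- the "F" part of the contraction
  have claimF : ∀ I J K : Fin N,
      (∑ l, ∑ m, ∑ n, ∑ s,
        (3 * a I s m n + 3 * a s I m n) * a J K l s * (u l * (u m * u n)))
      = ∑ l, ∑ s, a J K l s * u l
          * (∑ m, ∑ n, (3 * a I s m n + 3 * a s I m n) * (u m * u n)) := by
    intro I J K
    refine Finset.sum_congr rfl fun l _ => ?_
    calc (∑ m, ∑ n, ∑ s,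
          (3 * a I s m n + 3 * a s I m n) * a J K l s * (u l * (u m * u n)))
        = ∑ s, ∑ m, ∑ n,
            (3 * a I s m n + 3 * a s I m n) * a J K l s * (u l * (u m * u n)) :=
          (s3_cyc (fun s m n =>
            (3 * a I s m n + 3 * a s I m n) * a J K l s * (u l * (u m * u n)))).symm
      _ = ∑ s, a J K l s * u l
            * (∑ m, ∑ n, (3 * a I s m n + 3 * a s I m n) * (u m * u n)) := by
          refine Finset.sum_congr rfl fun s _ => ?_
          rw [Finset.mul_sum]
          refine Finset.sum_congr rfl fun m _ => ?_
          rw [Finset.mul_sum]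
          exact Finset.sum_congr rfl fun n _ => by ring
  -- the "D" (delta) part of the contraction
  have claimD : ∀ I J K : Fin N,
      (∑ l, ∑ m, ∑ n, ∑ s,
        K₁ * kd I m * kd s n * a J K l s * (u l * (u m * u n)))
      = ∑ l, ∑ s, a J K l s * u l * (K₁ * (u I * u s)) := by
    intro I J K
    refine Finset.sum_congr rfl fun l _ => ?_
    calc (∑ m, ∑ n, ∑ s,
          K₁ * kd I m * kd s n * a J K l s * (u l * (u m * u n)))
        = ∑ s, ∑ m, ∑ n,
            K₁ * kd I m * kd s n * a J K l s * (u l * (u m * u n)) :=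
          (s3_cyc (fun s m n =>
            K₁ * kd I m * kd s n * a J K l s * (u l * (u m * u n)))).symm
      _ = ∑ s, a J K l s * u l * (K₁ * (u I * u s)) := by
          refine Finset.sum_congr rfl fun s _ => ?_
          calc (∑ m, ∑ n,
                K₁ * kd I m * kd s n * a J K l s * (u l * (u m * u n)))
              = ∑ m, kd I m * (K₁ * a J K l s * (u l * (u m * u s))) := by
                refine Finset.sum_congr rfl fun m _ => ?_
                calc (∑ n, K₁ * kd I m * kd s n * a J K l s * (u l * (u m * u n)))
                    = ∑ n, kd s n
                        * (kd I m * (K₁ * a J K l s * (u l * (u m * u n)))) :=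
                      Finset.sum_congr rfl fun n _ => by ring
                  _ = kd I m * (K₁ * a J K l s * (u l * (u m * u s))) := kdsum s _
            _ = K₁ * a J K l s * (u l * (u I * u s)) := kdsum I _
            _ = a J K l s * u l * (K₁ * (u I * u s)) := by ring
  -- contraction of a single cubicTerm with u³
  have claimS : ∀ I J K : Fin N,
      (∑ l, ∑ m, ∑ n, cubicTerm a K₁ I J K l m n * (u l * (u m * u n)))
      = ((∑ l, ∑ s, a J K l s * u l
            * (∑ m, ∑ n, (3 * a I s m n + 3 * a s I m n) * (u m * u n)))
          - ∑ l, ∑ s, a J K l s * u l * (K₁ * (u I * u s)))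
        - ((∑ l, ∑ s, a I K l s * u l
            * (∑ m, ∑ n, (3 * a J s m n + 3 * a s J m n) * (u m * u n)))
          - ∑ l, ∑ s, a I K l s * u l * (K₁ * (u J * u s))) := by
    intro I J K
    simp only [cubicTerm, Finset.sum_mul, sub_mul, Finset.sum_sub_distrib]
    rw [claimF I J K, claimD I J K, claimF J I K, claimD J I K]
  -- vanishing of the contraction, from h2
  have hS0 : ∀ I J K : Fin N,
      (∑ l, ∑ m, ∑ n, cubicTerm a K₁ I J K l m n * (u l * (u m * u n))) = 0 := by
    intro I J K
    have h0 : ∑ l, ∑ m, ∑ n,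
        (cubicTerm a K₁ I J K l m n + cubicTerm a K₁ I J K l n m
          + cubicTerm a K₁ I J K m l n + cubicTerm a K₁ I J K m n l
          + cubicTerm a K₁ I J K n l m + cubicTerm a K₁ I J K n m l)
          * (u l * (u m * u n)) = 0 := by
      simp only [h2, zero_mul, Finset.sum_const_zero]
    simp only [add_mul, Finset.sum_add_distrib] at h0
    have eS2 : (∑ l, ∑ m, ∑ n,
          cubicTerm a K₁ I J K l n m * (u l * (u m * u n)))
        = ∑ l, ∑ m, ∑ n, cubicTerm a K₁ I J K l m n * (u l * (u m * u n)) := by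
      calc (∑ l, ∑ m, ∑ n, cubicTerm a K₁ I J K l n m * (u l * (u m * u n)))
          = ∑ l, ∑ m, ∑ n, cubicTerm a K₁ I J K l m n * (u l * (u n * u m)) :=
            (Finset.sum_congr rfl fun l _ => Finset.sum_comm)
        _ = ∑ l, ∑ m, ∑ n, cubicTerm a K₁ I J K l m n * (u l * (u m * u n)) :=
            Finset.sum_congr rfl fun l _ => Finset.sum_congr rfl fun m _ =>
              Finset.sum_congr rfl fun n _ => by ring
    have eS3 : (∑ l, ∑ m, ∑ n,
          cubicTerm a K₁ I J K m l n * (u l * (u m * u n)))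
        = ∑ l, ∑ m, ∑ n, cubicTerm a K₁ I J K l m n * (u l * (u m * u n)) := by
      calc (∑ l, ∑ m, ∑ n, cubicTerm a K₁ I J K m l n * (u l * (u m * u n)))
          = ∑ l, ∑ m, ∑ n, cubicTerm a K₁ I J K l m n * (u m * (u l * u n)) :=
            Finset.sum_comm
        _ = ∑ l, ∑ m, ∑ n, cubicTerm a K₁ I J K l m n * (u l * (u m * u n)) :=
            Finset.sum_congr rfl fun l _ => Finset.sum_congr rfl fun m _ =>
              Finset.sum_congr rfl fun n _ => by ring
    have eS4 : (∑ l, ∑ m, ∑ n,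
          cubicTerm a K₁ I J K m n l * (u l * (u m * u n)))
        = ∑ l, ∑ m, ∑ n, cubicTerm a K₁ I J K l m n * (u l * (u m * u n)) := by
      calc (∑ l, ∑ m, ∑ n, cubicTerm a K₁ I J K m n l * (u l * (u m * u n)))
          = ∑ l, ∑ m, ∑ n, cubicTerm a K₁ I J K l m n * (u n * (u l * u m)) :=
            s3_cyc (fun i j k => cubicTerm a K₁ I J K j k i * (u i * (u j * u k)))
        _ = ∑ l, ∑ m, ∑ n, cubicTerm a K₁ I J K l m n * (u l * (u m * u n)) :=
            Finset.sum_congr rfl fun l _ => Finset.sum_congr rfl fun m _ =>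
              Finset.sum_congr rfl fun n _ => by ring
    have eS5 : (∑ l, ∑ m, ∑ n,
          cubicTerm a K₁ I J K n l m * (u l * (u m * u n)))
        = ∑ l, ∑ m, ∑ n, cubicTerm a K₁ I J K l m n * (u l * (u m * u n)) := by
      calc (∑ l, ∑ m, ∑ n, cubicTerm a K₁ I J K n l m * (u l * (u m * u n)))
          = ∑ l, ∑ m, ∑ n, cubicTerm a K₁ I J K l m n * (u m * (u n * u l)) :=
            (s3_cyc (fun i j k => cubicTerm a K₁ I J K i j k * (u j * (u k * u i)))).symm
        _ = ∑ l, ∑ m, ∑ n, cubicTerm a K₁ I J K l m n * (u l * (u m * u n)) :=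
            Finset.sum_congr rfl fun l _ => Finset.sum_congr rfl fun m _ =>
              Finset.sum_congr rfl fun n _ => by ring
    have eS6 : (∑ l, ∑ m, ∑ n,
          cubicTerm a K₁ I J K n m l * (u l * (u m * u n)))
        = ∑ l, ∑ m, ∑ n, cubicTerm a K₁ I J K l m n * (u l * (u m * u n)) := by
      calc (∑ l, ∑ m, ∑ n, cubicTerm a K₁ I J K n m l * (u l * (u m * u n)))
          = ∑ l, ∑ m, ∑ n, cubicTerm a K₁ I J K l m n * (u n * (u m * u l)) :=
            (s3_13 (fun i j k => cubicTerm a K₁ I J K i j k * (u k * (u j * u i)))).symm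
        _ = ∑ l, ∑ m, ∑ n, cubicTerm a K₁ I J K l m n * (u l * (u m * u n)) :=
            Finset.sum_congr rfl fun l _ => Finset.sum_congr rfl fun m _ =>
              Finset.sum_congr rfl fun n _ => by ring
    rw [eS2, eS3, eS4, eS5, eS6] at h0
    linarith
  -- the key identity for Q
  have keyQ : ∀ p q r : Fin N,
      (∑ s, (∑ m, a p q m s * u m)
        * ((∑ k, ∑ l, 3 * (a s r k l + a r s k l) * u k * u l) - K₁ * u s * u r))
      = ∑ s, (∑ m, a r q m s * u m)
        * ((∑ k, ∑ l, 3 * (a p s k l + a s p k l) * u k * u l) - K₁ * u p * u s) := by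
    intro p q r
    have claimA : (∑ s, (∑ m, a p q m s * u m)
          * ((∑ k, ∑ l, 3 * (a s r k l + a r s k l) * u k * u l) - K₁ * u s * u r))
        = (∑ l, ∑ s, a p q l s * u l
            * (∑ m, ∑ n, (3 * a r s m n + 3 * a s r m n) * (u m * u n)))
          - ∑ l, ∑ s, a p q l s * u l * (K₁ * (u r * u s)) := by
      calc (∑ s, (∑ m, a p q m s * u m)
            * ((∑ k, ∑ l, 3 * (a s r k l + a r s k l) * u k * u l) - K₁ * u s * u r))
          = ∑ s, ∑ m, (a p q m s * u m)
            * ((∑ k, ∑ l, 3 * (a s r k l + a r s k l) * u k * u l) - K₁ * u s * u r) :=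
            Finset.sum_congr rfl fun s _ => Finset.sum_mul _ _ _
        _ = ∑ m, ∑ s, (a p q m s * u m)
            * ((∑ k, ∑ l, 3 * (a s r k l + a r s k l) * u k * u l) - K₁ * u s * u r) :=
            sswap _
        _ = ∑ l', ∑ s, (a p q l' s * u l'
              * (∑ m, ∑ n, (3 * a r s m n + 3 * a s r m n) * (u m * u n))
            - a p q l' s * u l' * (K₁ * (u r * u s))) := by
            refine Finset.sum_congr rfl fun l' _ => Finset.sum_congr rfl fun s _ => ?_
            have hsum : (∑ k, ∑ l, 3 * (a s r k l + a r s k l) * u k * u l)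
                = ∑ m, ∑ n, (3 * a r s m n + 3 * a s r m n) * (u m * u n) :=
              Finset.sum_congr rfl fun m _ => Finset.sum_congr rfl fun n _ => by ring
            rw [hsum]
            ring
        _ = (∑ l, ∑ s, a p q l s * u l
              * (∑ m, ∑ n, (3 * a r s m n + 3 * a s r m n) * (u m * u n)))
            - ∑ l, ∑ s, a p q l s * u l * (K₁ * (u r * u s)) := by
            simp only [Finset.sum_sub_distrib]
    have claimB : (∑ s, (∑ m, a r q m s * u m)
          * ((∑ k, ∑ l, 3 * (a p s k l + a s p k l) * u k * u l) - K₁ * u p * u s))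
        = (∑ l, ∑ s, a r q l s * u l
            * (∑ m, ∑ n, (3 * a p s m n + 3 * a s p m n) * (u m * u n)))
          - ∑ l, ∑ s, a r q l s * u l * (K₁ * (u p * u s)) := by
      calc (∑ s, (∑ m, a r q m s * u m)
            * ((∑ k, ∑ l, 3 * (a p s k l + a s p k l) * u k * u l) - K₁ * u p * u s))
          = ∑ s, ∑ m, (a r q m s * u m)
            * ((∑ k, ∑ l, 3 * (a p s k l + a s p k l) * u k * u l) - K₁ * u p * u s) :=
            Finset.sum_congr rfl fun s _ => Finset.sum_mul _ _ _
        _ = ∑ m, ∑ s, (a r q m s * u m)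
            * ((∑ k, ∑ l, 3 * (a p s k l + a s p k l) * u k * u l) - K₁ * u p * u s) :=
            sswap _
        _ = ∑ l', ∑ s, (a r q l' s * u l'
              * (∑ m, ∑ n, (3 * a p s m n + 3 * a s p m n) * (u m * u n))
            - a r q l' s * u l' * (K₁ * (u p * u s))) := by
            refine Finset.sum_congr rfl fun l' _ => Finset.sum_congr rfl fun s _ => ?_
            have hsum : (∑ k, ∑ l, 3 * (a p s k l + a s p k l) * u k * u l)
                = ∑ m, ∑ n, (3 * a p s m n + 3 * a s p m n) * (u m * u n) :=
              Finset.sum_congr rfl fun m _ => Finset.sum_congr rfl fun n _ => by ring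
            rw [hsum]
            ring
        _ = (∑ l, ∑ s, a r q l s * u l
              * (∑ m, ∑ n, (3 * a p s m n + 3 * a s p m n) * (u m * u n)))
            - ∑ l, ∑ s, a r q l s * u l * (K₁ * (u p * u s)) := by
            simp only [Finset.sum_sub_distrib]
    have hz := hS0 r p q
    rw [claimS r p q] at hz
    rw [claimA, claimB]
    linarith
  -- Part 3
  have part3 : ∀ x y z, Q (mul x y) z = Q x (mul z y) := by
    intro x y z
    rw [hQ (mul x y) z, hQ x (mul z y),
      helperL (fun i j => (∑ k, ∑ l, 3 * (a i j k l + a j i k l) * u k * u l)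
        - K₁ * u i * u j) x y z,
      helperR (fun i j => (∑ k, ∑ l, 3 * (a i j k l + a j i k l) * u k * u l)
        - K₁ * u i * u j) x y z]
    exact Finset.sum_congr rfl fun p _ => Finset.sum_congr rfl fun q _ =>
      Finset.sum_congr rfl fun r _ => by rw [keyQ p q r]
  exact ⟨part1, part2, part3⟩
end

section
/- Let U ⊆ ℝ^N be a connected open set, η^{ij} a constant symmetric invertible real N×N matrix with inverse η_{ij}, and H^1,…,H^N : U → ℝ smooth. Suppose the commutativity condition Σ_s η^{is} ∂²H^j/∂u^s∂u^k = Σ_s η^{js} ∂²H^i/∂u^s∂u^k holds at every point of U for all indices i,j,k. Then for each pair of indices p,l the function u ↦ Σ_s η_{ps} (∂H^s/∂u^l)(u) − Σ_s η_{ls} (∂H^s/∂u^p)(u) is constant on U; i.e. there exist real constants c_{pl} such that Σ_s η_{ps} ∂H^s/∂u^l = Σ_s η_{ls} ∂H^s/∂u^p + c_{lp} − c_{pl} on all of U. -/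
/-- Contracting with the inverse matrix. -/
lemma contract_aux {N : ℕ} (η : Matrix (Fin N) (Fin N) ℝ) (hηi : IsUnit η.det) (p : Fin N)
    (f : Fin N → ℝ) : ∑ i, η⁻¹ p i * ∑ s, η i s * f s = f p := by
  have h := Matrix.nonsing_inv_mul η hηi
  simp_rw [Finset.mul_sum]
  rw [Finset.sum_comm]
  have h2 : ∀ s, ∑ i, η⁻¹ p i * (η i s * f s) = (η⁻¹ * η) p s * f s := fun s => by
    rw [Matrix.mul_apply, Finset.sum_mul]
    exact Finset.sum_congr rfl fun i _ => (mul_assoc _ _ _).symm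
  simp_rw [h2, h, Matrix.one_apply, ite_mul, one_mul, zero_mul]
  simp

/-- If the multiplication of the algebras `A(u)` is commutative at every point of
a connected open set `U` (i.e. `η^{is}∂²H^j/∂u^s∂u^k = η^{js}∂²H^i/∂u^s∂u^k` on
`U`), then there exist constants `c_{pl}` with
`η_{ps}∂H^s/∂u^l = η_{ls}∂H^s/∂u^p + c_{lp} − c_{pl}` on all of `U`, where
`η_{ij}` is the inverse matrix of `η^{ij}`. -/
theorem stmt_11 {N : ℕ} (U : Set (Fin N → ℝ)) (hUo : IsOpen U)
    (hUc : IsConnected U)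
    (η : Matrix (Fin N) (Fin N) ℝ) (hηs : η.IsSymm) (hηi : IsUnit η.det)
    (H : Fin N → (Fin N → ℝ) → ℝ)
    (hH : ∀ i, ContDiffOn ℝ (⊤ : ℕ∞) (H i) U)
    (hcomm : ∀ u ∈ U, ∀ i j k,
        ∑ s, η i s * pd2 s k (H j) u = ∑ s, η j s * pd2 s k (H i) u) :
    ∃ c : Fin N → Fin N → ℝ, ∀ u ∈ U, ∀ p l,
      ∑ s, η⁻¹ p s * pd l (H s) u
        = (∑ s, η⁻¹ l s * pd p (H s) u) + c l p - c p l := by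
  obtain ⟨u₀, hu₀⟩ := hUc.nonempty
  -- smoothness of first partials
  have hpd : ∀ s l, ContDiffOn ℝ (⊤ : ℕ∞) (pd l (H s)) U := by
    intro s l
    have h1 : ContDiffOn ℝ (⊤ : ℕ∞) (fderiv ℝ (H s)) U :=
      (hH s).fderiv_of_isOpen hUo (by exact_mod_cast le_top)
    exact h1.clm_apply contDiffOn_const
  have hdiffpd : ∀ s l, ∀ u ∈ U, DifferentiableAt ℝ (pd l (H s)) u := by
    intro s l u hu
    exact ((hpd s l).differentiableOn (by simp) u hu).differentiableAt
      (hUo.mem_nhds hu)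
  -- derived commutativity with inverse matrix
  have hder : ∀ u ∈ U, ∀ p l k,
      ∑ s, η⁻¹ p s * pd2 l k (H s) u = ∑ s, η⁻¹ l s * pd2 p k (H s) u := by
    intro u hu p l k
    calc ∑ j, η⁻¹ p j * pd2 l k (H j) u
        = ∑ j, η⁻¹ p j * ∑ i, η⁻¹ l i * ∑ s, η i s * pd2 s k (H j) u := by
          refine Finset.sum_congr rfl fun j _ => ?_
          rw [contract_aux η hηi l (fun s => pd2 s k (H j) u)]
      _ = ∑ j, η⁻¹ p j * ∑ i, η⁻¹ l i * ∑ s, η j s * pd2 s k (H i) u := by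
          refine Finset.sum_congr rfl fun j _ => ?_
          congr 1
          refine Finset.sum_congr rfl fun i _ => ?_
          rw [hcomm u hu i j k]
      _ = ∑ i, η⁻¹ l i * ∑ j, η⁻¹ p j * ∑ s, η j s * pd2 s k (H i) u := by
          simp_rw [Finset.mul_sum]
          rw [Finset.sum_comm]
          exact Finset.sum_congr rfl fun i _ => Finset.sum_congr rfl fun j _ =>
            Finset.sum_congr rfl fun s _ => by ring
      _ = ∑ i, η⁻¹ l i * pd2 p k (H i) u := by
          refine Finset.sum_congr rfl fun i _ => ?_
          rw [contract_aux η hηi p (fun s => pd2 s k (H i) u)]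
  -- the difference function and its derivative
  set F : Fin N → Fin N → (Fin N → ℝ) → ℝ := fun p l u =>
    (∑ s, η⁻¹ p s * pd l (H s) u) - (∑ s, η⁻¹ l s * pd p (H s) u) with hFdef
  have hFd : ∀ p l, ∀ u ∈ U, DifferentiableAt ℝ (F p l) u := by
    intro p l u hu
    exact DifferentiableAt.sub
      (DifferentiableAt.fun_sum fun s _ => (hdiffpd s l u hu).const_mul _)
      (DifferentiableAt.fun_sum fun s _ => (hdiffpd s p u hu).const_mul _)
  have hF0 : ∀ p l, ∀ u ∈ U, fderiv ℝ (F p l) u = 0 := by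
    intro p l u hu
    have hA : DifferentiableAt ℝ (fun y => ∑ s, η⁻¹ p s * pd l (H s) y) u :=
      DifferentiableAt.fun_sum fun s _ => (hdiffpd s l u hu).const_mul _
    have hB : DifferentiableAt ℝ (fun y => ∑ s, η⁻¹ l s * pd p (H s) y) u :=
      DifferentiableAt.fun_sum fun s _ => (hdiffpd s p u hu).const_mul _
    have hfd : fderiv ℝ (F p l) u =
        (∑ s, η⁻¹ p s • fderiv ℝ (pd l (H s)) u) - ∑ s, η⁻¹ l s • fderiv ℝ (pd p (H s)) u := by
      rw [hFdef]
      beta_reduce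
      rw [fderiv_fun_sub hA hB, fderiv_fun_sum fun s _ => (hdiffpd s l u hu).const_mul _,
        fderiv_fun_sum fun s _ => (hdiffpd s p u hu).const_mul _]
      congr 1
      · exact Finset.sum_congr rfl fun s _ => fderiv_const_mul (hdiffpd s l u hu) _
      · exact Finset.sum_congr rfl fun s _ => fderiv_const_mul (hdiffpd s p u hu) _
    -- evaluate on basis vectors
    have hbasis : ∀ k, fderiv ℝ (F p l) u (Pi.single k 1) = 0 := by
      intro k
      rw [hfd]
      simp only [ContinuousLinearMap.sub_apply, ContinuousLinearMap.coe_sum',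
        Finset.sum_apply, ContinuousLinearMap.coe_smul', Pi.smul_apply, smul_eq_mul]
      have : ∀ s m, fderiv ℝ (pd m (H s)) u (Pi.single k 1) = pd2 m k (H s) u := fun s m => rfl
      simp_rw [this]
      rw [hder u hu p l k]
      ring
    refine ContinuousLinearMap.ext fun x => ?_
    have hx : x = ∑ i, x i • (Pi.single i 1 : Fin N → ℝ) := by
      funext j
      simp [Pi.single_apply, Finset.sum_apply, mul_comm]
    rw [hx, map_sum]
    simp only [map_smul, hbasis, smul_zero, Finset.sum_const_zero,
      ContinuousLinearMap.zero_apply]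
  -- local constancy on U
  have key : ∀ p l, ∀ u ∈ U, F p l u = F p l u₀ := by
    intro p l
    haveI : ConnectedSpace U := Subtype.connectedSpace hUc
    have hlc : IsLocallyConstant (fun x : U => F p l x) := by
      rw [IsLocallyConstant.iff_exists_open]
      rintro ⟨x, hx⟩
      obtain ⟨ε, hε, hball⟩ := Metric.isOpen_iff.1 hUo x hx
      refine ⟨Subtype.val ⁻¹' Metric.ball x ε,
        Metric.isOpen_ball.preimage continuous_subtype_val, by simpa using hε, ?_⟩
      rintro ⟨y, hy⟩ hyb
      have hdo : DifferentiableOn ℝ (F p l) (Metric.ball x ε) := fun z hz =>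
        (hFd p l z (hball hz)).differentiableWithinAt
      have hz0 : ∀ z ∈ Metric.ball x ε, fderivWithin ℝ (F p l) (Metric.ball x ε) z = 0 := by
        intro z hz
        rw [fderivWithin_of_isOpen Metric.isOpen_ball hz]
        exact hF0 p l z (hball hz)
      exact (convex_ball x ε).is_const_of_fderivWithin_eq_zero hdo hz0 hyb
        (Metric.mem_ball_self hε)
    intro u hu
    exact hlc.apply_eq_of_preconnectedSpace ⟨u, hu⟩ ⟨u₀, hu₀⟩
  refine ⟨fun p l => ∑ s, η⁻¹ l s * pd p (H s) u₀, fun u hu p l => ?_⟩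
  have h := key p l u hu
  rw [hFdef] at h
  simp only at h
  linarith
end
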